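/- arXiv:1804.01752 — 4 statements merged into one kernel-verified Lean document; each statement's English description precedes it below -/
import Mathlib

section
/- Let (Ω, F, P) be a probability space with a filtration (F_t)_{t∈[0,T]}, let U be a real separable Hilbert space, and let R : U → U be an injective bounded linear operator with dense range. Then for every progressively measurable process v : Ω × [0,T] → U with E∫_0^T ‖v_t‖² dt < ∞ and every ε > 0 there exists a progressively measurable process α : Ω × [0,T] → U which is uniformly bounded (i.e. ‖α_t(ω)‖ ≤ n for some n ∈ ℕ and all (ω,t)) such that E∫_0^T ‖v_t − ∫_0^t R α_s ds‖² dt < ε. In other words, the linear space of processes of the form (∫_0^t R α_s ds)_{t∈[0,T]}, with α progressively measurable and uniformly bounded, is dense in the space of square-integrable progressively measurable U-valued processes on [0,T]. -/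
/-!
Approximate `v` in `L²(P ⊗ dt)` in three steps, each with error `ε / 9`, and combine them with
`‖a + b + c‖² ≤ 3 (‖a‖² + ‖b‖² + ‖c‖²)`.

First, `w = φ ∘ v`, set to `0` at negative times, with `φ : U → U` a simple function close to the
identity, takes finitely many values. Second, by the Lebesgue differentiation theorem and dominated
convergence, `w` is close to its backward moving average `h⁻¹ ∫_{t-h}^t w` for small `h > 0`.
This average is `∫_0^t u` for `u_s = h⁻¹ (w_s - w_{s-h})`, a progressive process with finitely many
values. As `R` has dense range, each of these values lies within `δ` of some `R b`, and `α = b ∘ u`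
is bounded, progressive and satisfies `‖∫_0^t (u - R α)‖ ≤ δ t`.
-/

open MeasureTheory Filter Set
open scoped ENNReal Topology
open TopologicalSpace (PseudoMetrizableSpace)

section Integrability

variable {E : Type*} [NormedAddCommGroup E]

lemma locallyIntegrable_of_norm_le {X : Type*} [TopologicalSpace X] [MeasurableSpace X]
    {μ : Measure X} [IsLocallyFiniteMeasure μ] {f : X → E} (hf : AEStronglyMeasurable f μ)
    {C : ℝ} (hC : ∀ x, ‖f x‖ ≤ C) : LocallyIntegrable f μ :=
  (locallyIntegrable_const C).mono hf
    (ae_of_all _ fun x => (hC x).trans (by rw [Real.norm_eq_abs]; exact le_abs_self C))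

lemma MeasureTheory.LocallyIntegrable.intervalIntegrable {f : ℝ → E} {μ : Measure ℝ}
    (hf : LocallyIntegrable f μ) (a b : ℝ) : IntervalIntegrable f μ a b :=
  (hf.integrableOn_isCompact isCompact_uIcc).intervalIntegrable

lemma intervalIntegrable_of_norm_le {f : ℝ → E} (hf : StronglyMeasurable f) {C : ℝ}
    (hC : ∀ s, ‖f s‖ ≤ C) (a b : ℝ) : IntervalIntegrable f volume a b :=
  intervalIntegrable_const.mono_fun' hf.aestronglyMeasurable (ae_of_all _ hC)

end Integrability

lemma tendsto_lintegral_lintegral_of_dominated {α β ι : Type*} [MeasurableSpace α]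
    [MeasurableSpace β] {μ : Measure α} {ν : Measure β} [SFinite ν] {l : Filter ι}
    [l.IsCountablyGenerated] {F : ι → α × β → ℝ≥0∞} (B : α × β → ℝ≥0∞)
    (hF : ∀ i, Measurable (F i)) (hB : Measurable B) (hFB : ∀ i p, F i p ≤ B p)
    (hBfin : ∫⁻ a, ∫⁻ b, B (a, b) ∂ν ∂μ ≠ ∞)
    (hlim : ∀ a, ∀ᵐ b ∂ν, Tendsto (fun i => F i (a, b)) l (𝓝 0)) :
    Tendsto (fun i => ∫⁻ a, ∫⁻ b, F i (a, b) ∂ν ∂μ) l (𝓝 0) := by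
  have hBa : ∀ᵐ a ∂μ, ∫⁻ b, B (a, b) ∂ν ≠ ∞ :=
    (ae_lt_top hB.lintegral_prod_right' hBfin).mono fun a ha => ha.ne
  have hinner : ∀ᵐ a ∂μ, Tendsto (fun i => ∫⁻ b, F i (a, b) ∂ν) l (𝓝 0) := by
    filter_upwards [hBa] with a ha
    simpa using tendsto_lintegral_filter_of_dominated_convergence (fun b => B (a, b))
      (.of_forall fun i => (hF i).comp measurable_prodMk_left)
      (.of_forall fun i => ae_of_all _ fun b => hFB i (a, b)) ha (hlim a)
  simpa using tendsto_lintegral_filter_of_dominated_convergence (fun a => ∫⁻ b, B (a, b) ∂ν)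
    (.of_forall fun i => (hF i).lintegral_prod_right')
    (.of_forall fun i => ae_of_all _ fun a => lintegral_mono fun b => hFB i (a, b)) hBfin hinner

lemma lintegral_const_mul_add_add {α : Type*} [MeasurableSpace α] {μ : Measure α} {c : ℝ≥0∞}
    (hc : c ≠ ∞) {F G H : α → ℝ≥0∞} (hF : Measurable F) (hG : Measurable G) :
    ∫⁻ x, c * (F x + G x + H x) ∂μ = c * (∫⁻ x, F x ∂μ + ∫⁻ x, G x ∂μ + ∫⁻ x, H x ∂μ) := by
  rw [lintegral_const_mul' _ _ hc, ← lintegral_add_left hF,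
    ← lintegral_add_left (f := fun x => F x + G x) (hF.add hG)]

lemma ofReal_norm_add_add_sq_le {E : Type*} [SeminormedAddCommGroup E] (a b c : E) :
    ENNReal.ofReal (‖a + b + c‖ ^ 2) ≤
      3 * (ENNReal.ofReal (‖a‖ ^ 2) + ENNReal.ofReal (‖b‖ ^ 2) + ENNReal.ofReal (‖c‖ ^ 2)) := by
  have h3 : ‖a + b + c‖ ≤ ‖a‖ + ‖b‖ + ‖c‖ := norm_add₃_le
  have hreal : ‖a + b + c‖ ^ 2 ≤ 3 * (‖a‖ ^ 2 + ‖b‖ ^ 2 + ‖c‖ ^ 2) := by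
    nlinarith [norm_nonneg (a + b + c), sq_nonneg (‖a‖ - ‖b‖), sq_nonneg (‖b‖ - ‖c‖),
      sq_nonneg (‖a‖ - ‖c‖)]
  calc ENNReal.ofReal (‖a + b + c‖ ^ 2)
      ≤ ENNReal.ofReal (3 * (‖a‖ ^ 2 + ‖b‖ ^ 2 + ‖c‖ ^ 2)) := ENNReal.ofReal_le_ofReal hreal
    _ = _ := by
      rw [ENNReal.ofReal_mul (by norm_num), ENNReal.ofReal_add (by positivity) (by positivity),
        ENNReal.ofReal_add (by positivity) (by positivity), ENNReal.ofReal_ofNat]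

section MeanSqDist

variable {Ω U : Type*} {mΩ : MeasurableSpace Ω} [NormedAddCommGroup U]

noncomputable def meanSqDist (P : Measure Ω) (T : ℝ) (f g : ℝ → Ω → U) : ℝ≥0∞ :=
  ∫⁻ ω, (∫⁻ t in Icc (0 : ℝ) T, ENNReal.ofReal (‖f t ω - g t ω‖ ^ 2)) ∂P

variable {P : Measure Ω} {T : ℝ}

lemma meanSqDist_congr_right {f g g' : ℝ → Ω → U} (h : ∀ ω, ∀ t ∈ Icc (0 : ℝ) T, g t ω = g' t ω) :
    meanSqDist P T f g = meanSqDist P T f g' :=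
  lintegral_congr fun ω => setLIntegral_congr_fun measurableSet_Icc fun t ht => by rw [h ω t ht]

lemma meanSqDist_le_of_norm_sub_le [IsProbabilityMeasure P] {f g : ℝ → Ω → U} {c : ℝ}
    (h : ∀ ω, ∀ t ∈ Icc (0 : ℝ) T, ‖f t ω - g t ω‖ ≤ c) :
    meanSqDist P T f g ≤ ENNReal.ofReal (c ^ 2 * T) := by
  calc meanSqDist P T f g ≤ ∫⁻ _ω, (∫⁻ _t in Icc (0 : ℝ) T, ENNReal.ofReal (c ^ 2)) ∂P :=
        lintegral_mono fun ω => setLIntegral_mono measurable_const fun t ht =>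
          ENNReal.ofReal_le_ofReal (pow_le_pow_left₀ (norm_nonneg _) (h ω t ht) 2)
    _ = ENNReal.ofReal (c ^ 2 * T) := by
      rw [setLIntegral_const, Real.volume_Icc, sub_zero, lintegral_const, measure_univ, mul_one,
        ← ENNReal.ofReal_mul (sq_nonneg c)]

variable [MeasurableSpace U] [OpensMeasurableSpace U]

lemma meanSqDist_le_three_mul {f g h k : ℝ → Ω → U}
    (hfg : Measurable fun p : Ω × ℝ => f p.2 p.1 - g p.2 p.1)
    (hgh : Measurable fun p : Ω × ℝ => g p.2 p.1 - h p.2 p.1) :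
    meanSqDist P T f k ≤
      3 * (meanSqDist P T f g + meanSqDist P T g h + meanSqDist P T h k) := by
  have hsq : Measurable fun x : U => ENNReal.ofReal (‖x‖ ^ 2) := by fun_prop
  calc meanSqDist P T f k
      ≤ ∫⁻ ω, (∫⁻ t in Icc (0 : ℝ) T, 3 * (ENNReal.ofReal (‖f t ω - g t ω‖ ^ 2)
          + ENNReal.ofReal (‖g t ω - h t ω‖ ^ 2) + ENNReal.ofReal (‖h t ω - k t ω‖ ^ 2))) ∂P :=
        lintegral_mono fun ω => lintegral_mono fun t => by
          simpa using ofReal_norm_add_add_sq_le (f t ω - g t ω) (g t ω - h t ω) (h t ω - k t ω)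
    _ = ∫⁻ ω, 3 * ((∫⁻ t in Icc (0 : ℝ) T, ENNReal.ofReal (‖f t ω - g t ω‖ ^ 2))
          + (∫⁻ t in Icc (0 : ℝ) T, ENNReal.ofReal (‖g t ω - h t ω‖ ^ 2))
          + ∫⁻ t in Icc (0 : ℝ) T, ENNReal.ofReal (‖h t ω - k t ω‖ ^ 2)) ∂P :=
        lintegral_congr fun ω => lintegral_const_mul_add_add (by norm_num)
          ((hsq.comp hfg).comp measurable_prodMk_left) ((hsq.comp hgh).comp measurable_prodMk_left)
    _ = _ := lintegral_const_mul_add_add (by norm_num) (hsq.comp hfg).lintegral_prod_right'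
        (hsq.comp hgh).lintegral_prod_right'

end MeanSqDist

namespace MeasureTheory.IsStronglyProgressive

variable {Ω E : Type*} {mΩ : MeasurableSpace Ω} {𝓕 : Filtration ℝ mΩ}

lemma stronglyMeasurable_uncurry [TopologicalSpace E] [PseudoMetrizableSpace E]
    {g : ℝ → Ω → E} (hg : IsStronglyProgressive 𝓕 g) :
    StronglyMeasurable fun p : Ω × ℝ => g p.2 p.1 := by
  have htrunc (n : ℕ) : StronglyMeasurable fun p : Ω × ℝ => g (min p.2 n) p.1 :=
    (hg n).comp_measurable
      (((measurable_snd.min measurable_const).subtype_mk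
        (h := fun _ => mem_Iic.2 (min_le_right _ _))).prodMk (measurable_fst.mono le_rfl (𝓕.le n)))
  refine stronglyMeasurable_of_tendsto atTop htrunc (tendsto_pi_nhds.2 fun p => ?_)
  refine tendsto_atTop_of_eventually_const (i₀ := ⌈p.2⌉₊) fun n hn => ?_
  rw [min_eq_left ((Nat.le_ceil p.2).trans (by exact_mod_cast hn))]

lemma stronglyMeasurable_path [TopologicalSpace E] [PseudoMetrizableSpace E]
    {g : ℝ → Ω → E} (hg : IsStronglyProgressive 𝓕 g) (ω : Ω) : StronglyMeasurable (g · ω) :=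
  hg.stronglyMeasurable_uncurry.comp_measurable measurable_prodMk_left

lemma comp_sub_const [TopologicalSpace E] {g : ℝ → Ω → E} (hg : IsStronglyProgressive 𝓕 g)
    {h : ℝ} (hh : 0 ≤ h) :
    IsStronglyProgressive 𝓕 fun t ω => g (t - h) ω :=
  hg.comp (t := fun t _ => t - h)
    (fun _ => ((measurable_subtype_coe.comp measurable_fst).sub_const h).stronglyMeasurable)
    (fun _ _ => by linarith)

lemma indicator_time [TopologicalSpace E] [Zero E] {g : ℝ → Ω → E}
    (hg : IsStronglyProgressive 𝓕 g) {s : Set ℝ} (hs : MeasurableSet s) :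
    IsStronglyProgressive 𝓕 fun t ω => s.indicator (g · ω) t := fun i =>
  (hg i).indicator (s := {p : Iic i × Ω | (p.1 : ℝ) ∈ s})
    ((measurable_subtype_coe.comp measurable_fst) hs)

end MeasureTheory.IsStronglyProgressive

lemma Measurable.comp_isStronglyProgressive {Ω E F : Type*} {mΩ : MeasurableSpace Ω}
    {𝓕 : Filtration ℝ mΩ} [TopologicalSpace E] [MeasurableSpace E] [BorelSpace E]
    [PseudoMetrizableSpace E] [TopologicalSpace F] [MeasurableSpace F] [OpensMeasurableSpace F]
    [PseudoMetrizableSpace F] [SecondCountableTopology F] {ρ : E → F} (hρ : Measurable ρ)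
    {g : ℝ → Ω → E} (hg : IsStronglyProgressive 𝓕 g) :
    IsStronglyProgressive 𝓕 fun t ω => ρ (g t ω) :=
  fun i => (hρ.comp (hg i).measurable).stronglyMeasurable

section BackwardAverage

variable {E : Type*} [NormedAddCommGroup E] [NormedSpace ℝ E]

noncomputable def backwardAverage (h : ℝ) (f : ℝ → E) (t : ℝ) : E :=
  h⁻¹ • ∫ s in (t - h)..t, f s

lemma norm_backwardAverage_le {f : ℝ → E} {C : ℝ} (hC : ∀ s, ‖f s‖ ≤ C) (h t : ℝ) :
    ‖backwardAverage h f t‖ ≤ C := by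
  have hC0 : 0 ≤ C := (norm_nonneg _).trans (hC 0)
  have hint : ‖∫ s in (t - h)..t, f s‖ ≤ C * |h| := by
    have := intervalIntegral.norm_integral_le_of_norm_le_const (a := t - h) (b := t)
      fun s _ => hC s
    rwa [sub_sub_cancel] at this
  rw [backwardAverage, norm_smul, norm_inv, Real.norm_eq_abs]
  rcases eq_or_ne h 0 with rfl | hh
  · simpa using hC0
  calc |h|⁻¹ * ‖∫ s in (t - h)..t, f s‖ ≤ |h|⁻¹ * (C * |h|) := by gcongr
    _ = C := by field_simp

lemma integral_inv_smul_sub_comp_sub {f : ℝ → E} (hf : ∀ a b, IntervalIntegrable f volume a b)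
    (hf0 : ∀ s < 0, f s = 0) {h : ℝ} (hh : 0 ≤ h) (t : ℝ) :
    ∫ s in (0 : ℝ)..t, h⁻¹ • (f s - f (s - h)) = backwardAverage h f t := by
  have hshift : ∫ s in (0 : ℝ)..t, f (s - h) = ∫ s in (0 : ℝ)..(t - h), f s := by
    have hneg : ∫ s in (-h)..0, f s = 0 := by
      rw [intervalIntegral.integral_of_le (by linarith), integral_Ioc_eq_integral_Ioo,
        setIntegral_eq_zero_of_forall_eq_zero fun s hs => hf0 s hs.2]
    rw [intervalIntegral.integral_comp_sub_right (fun s => f s), zero_sub,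
      ← intervalIntegral.integral_add_adjacent_intervals (hf (-h) 0) (hf 0 (t - h)), hneg,
      zero_add]
  rw [intervalIntegral.integral_smul, intervalIntegral.integral_sub (hf 0 t)
    (by simpa using (hf (0 - h) (t - h)).comp_sub_right h), hshift,
    intervalIntegral.integral_interval_sub_left (hf 0 t) (hf 0 (t - h)), backwardAverage]

lemma MeasureTheory.LocallyIntegrable.ae_tendsto_backwardAverage [CompleteSpace E] {f : ℝ → E}
    (hf : LocallyIntegrable f volume) :
    ∀ᵐ t, Tendsto (fun h => backwardAverage h f t) (𝓝[>] 0) (𝓝 (f t)) := by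
  filter_upwards [LocallyIntegrable.ae_hasDerivAt_integral hf] with t ht
  have hslope := (ht 0).tendsto_slope_zero_left.comp
    (by simpa using tendsto_neg_nhdsGT_neg (a := (0 : ℝ)))
  refine hslope.congr fun h => ?_
  simp only [Function.comp_apply, backwardAverage, ← sub_eq_add_neg, inv_neg, neg_smul,
    ← smul_neg, neg_sub, intervalIntegral.integral_interval_sub_left (hf.intervalIntegrable 0 t)
      (hf.intervalIntegrable 0 (t - h))]

lemma stronglyMeasurable_backwardAverage {Ω : Type*} [MeasurableSpace Ω] {g : ℝ → Ω → E}
    (hg : StronglyMeasurable fun p : Ω × ℝ => g p.2 p.1) {C : ℝ} (hC : ∀ s ω, ‖g s ω‖ ≤ C)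
    (h : ℝ) : StronglyMeasurable fun p : Ω × ℝ => backwardAverage h (g · p.1) p.2 := by
  have hii (ω : Ω) (a b : ℝ) : IntervalIntegrable (g · ω) volume a b :=
    intervalIntegrable_of_norm_le (hg.comp_measurable measurable_prodMk_left) (hC · ω) a b
  have hprim : StronglyMeasurable fun p : Ω × ℝ => ∫ s in (0 : ℝ)..p.2, g s p.1 :=
    (stronglyMeasurable_uncurry_of_continuous_of_stronglyMeasurable
      (u := fun t ω => ∫ s in (0 : ℝ)..t, g s ω)
      (fun ω => intervalIntegral.continuous_primitive (hii ω) 0)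
      (fun t => (hg.integral_prod_right' (ν := volume.restrict (Ioc 0 t))).sub
        (hg.integral_prod_right' (ν := volume.restrict (Ioc t 0))))).comp_measurable
      measurable_swap
  have heq : (fun p : Ω × ℝ => backwardAverage h (g · p.1) p.2) =
      fun p => h⁻¹ • ((∫ s in (0 : ℝ)..p.2, g s p.1) - ∫ s in (0 : ℝ)..(p.2 - h), g s p.1) := by
    ext p
    rw [intervalIntegral.integral_interval_sub_left (hii _ _ _) (hii _ _ _), backwardAverage]
  rw [heq]
  exact (hprim.sub (hprim.comp_measurable
    (measurable_fst.prodMk (measurable_snd.sub_const h)))).const_smul _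

end BackwardAverage

lemma Finset.exists_measurable_bounded_eqOn {X V : Type*} [MeasurableSpace X]
    [MeasurableSingletonClass X] [NormedAddCommGroup V] [MeasurableSpace V] [BorelSpace V]
    [SecondCountableTopology V] (D : Finset X) (b : X → V) :
    ∃ ρ : X → V, Measurable ρ ∧ (∃ C, ∀ x, ‖ρ x‖ ≤ C) ∧ ∀ x ∈ D, ρ x = b x := by
  refine ⟨fun x => ∑ a ∈ D, ({a} : Set X).indicator (fun _ => b a) x,
    Finset.measurable_sum _ fun a _ => measurable_const.indicator (measurableSet_singleton a),
    ⟨∑ a ∈ D, ‖b a‖, fun x => (norm_sum_le _ _).trans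
      (Finset.sum_le_sum fun a _ => norm_indicator_le_norm_self _ _)⟩, fun x hx => ?_⟩
  dsimp only
  rw [Finset.sum_eq_single_of_mem x hx fun a _ hax =>
    indicator_of_notMem (fun h => hax (mem_singleton_iff.1 h).symm) _]
  exact indicator_of_mem rfl _

section Approximation

variable {Ω U : Type*} {mΩ : MeasurableSpace Ω} {𝓕 : Filtration ℝ mΩ} {P : Measure Ω} {T : ℝ}
  [NormedAddCommGroup U]

lemma tendsto_meanSqDist_approxOn [MeasurableSpace U] [BorelSpace U] [SecondCountableTopology U]
    {v : ℝ → Ω → U} (hv : Measurable fun p : Ω × ℝ => v p.2 p.1)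
    (hvint : ∫⁻ ω, (∫⁻ t in Icc (0 : ℝ) T, ENNReal.ofReal (‖v t ω‖ ^ 2)) ∂P ≠ ∞) :
    Tendsto (fun n => meanSqDist P T v fun t ω =>
      SimpleFunc.approxOn id measurable_id univ 0 (mem_univ 0) n (v t ω)) atTop (𝓝 0) := by
  set φ := SimpleFunc.approxOn id measurable_id univ (0 : U) (mem_univ 0)
  have hφ_le (n : ℕ) (x : U) : ‖x - φ n x‖ ≤ ‖x‖ := by
    simpa [edist_eq_enorm_sub, enorm_le_iff_norm_le, norm_sub_rev] using
      SimpleFunc.edist_approxOn_le measurable_id (mem_univ (0 : U)) x n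
  refine tendsto_lintegral_lintegral_of_dominated (ν := volume.restrict (Icc 0 T))
    (F := fun n p => ENNReal.ofReal (‖v p.2 p.1 - φ n (v p.2 p.1)‖ ^ 2))
    (fun p => ENNReal.ofReal (‖v p.2 p.1‖ ^ 2))
    (fun n => ENNReal.measurable_ofReal.comp
      ((hv.sub ((φ n).measurable.comp hv)).norm.pow_const 2))
    (ENNReal.measurable_ofReal.comp (hv.norm.pow_const 2))
    (fun n p => ENNReal.ofReal_le_ofReal (pow_le_pow_left₀ (norm_nonneg _) (hφ_le n _) 2))
    hvint fun ω => ae_of_all _ fun t => ?_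
  have hlim := SimpleFunc.tendsto_approxOn measurable_id (mem_univ (0 : U))
    (x := v t ω) (by simp)
  have hdiff : Tendsto (fun n => v t ω - φ n (v t ω)) atTop (𝓝 0) := by
    simpa using (tendsto_const_nhds (x := v t ω)).sub hlim
  simpa [Function.comp_def] using (ENNReal.continuous_ofReal.tendsto _).comp (hdiff.norm.pow 2)

lemma exists_finiteValued_meanSqDist_lt [MeasurableSpace U] [BorelSpace U]
    [SecondCountableTopology U] {v : ℝ → Ω → U} (hv : IsStronglyProgressive 𝓕 v)
    (hvint : ∫⁻ ω, (∫⁻ t in Icc (0 : ℝ) T, ENNReal.ofReal (‖v t ω‖ ^ 2)) ∂P ≠ ∞) {η : ℝ≥0∞}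
    (hη : 0 < η) :
    ∃ (w : ℝ → Ω → U) (E : Finset U), IsStronglyProgressive 𝓕 w ∧ (∀ t ω, w t ω ∈ E) ∧
      (∀ t < 0, ∀ ω, w t ω = 0) ∧ meanSqDist P T v w < η := by
  classical
  obtain ⟨n, hn⟩ := ((tendsto_meanSqDist_approxOn hv.stronglyMeasurable_uncurry.measurable
    hvint).eventually_lt_const hη).exists
  set φ := SimpleFunc.approxOn id measurable_id univ (0 : U) (mem_univ 0) n
  refine ⟨fun t ω => (Ici 0).indicator (fun s => φ (v s ω)) t, insert 0 φ.range,
    (φ.measurable.comp_isStronglyProgressive hv).indicator_time measurableSet_Ici,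
    fun t ω => ?_, fun t ht ω => indicator_of_notMem (not_le.2 ht) _, ?_⟩
  · dsimp only
    by_cases ht : t ∈ Ici 0
    · rw [indicator_of_mem ht]
      exact Finset.mem_insert_of_mem (φ.mem_range_self _)
    · rw [indicator_of_notMem ht]
      exact Finset.mem_insert_self _ _
  · exact (meanSqDist_congr_right (g' := fun t ω => φ (v t ω))
      fun ω t ht => indicator_of_mem (mem_Ici.2 ht.1) _).trans_lt hn

lemma tendsto_meanSqDist_backwardAverage [NormedSpace ℝ U] [CompleteSpace U] [IsFiniteMeasure P]
    {w : ℝ → Ω → U} (hw : StronglyMeasurable fun p : Ω × ℝ => w p.2 p.1) {C : ℝ}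
    (hC : ∀ s ω, ‖w s ω‖ ≤ C) :
    Tendsto (fun h => meanSqDist P T w fun t ω => backwardAverage h (w · ω) t) (𝓝[>] 0)
      (𝓝 0) := by
  have hsub_le (h : ℝ) (p : Ω × ℝ) : ‖w p.2 p.1 - backwardAverage h (w · p.1) p.2‖ ≤ 2 * C :=
    (norm_sub_le _ _).trans (by linarith [hC p.2 p.1, norm_backwardAverage_le (hC · p.1) h p.2])
  refine tendsto_lintegral_lintegral_of_dominated (ν := volume.restrict (Icc 0 T))
    (F := fun h p => ENNReal.ofReal (‖w p.2 p.1 - backwardAverage h (w · p.1) p.2‖ ^ 2))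
    (fun _ => ENNReal.ofReal ((2 * C) ^ 2))
    (fun h => ENNReal.measurable_ofReal.comp
      ((hw.sub (stronglyMeasurable_backwardAverage hw hC h)).norm.measurable.pow_const 2))
    measurable_const
    (fun h p => ENNReal.ofReal_le_ofReal (pow_le_pow_left₀ (norm_nonneg _) (hsub_le h p) 2))
    (by simp [lintegral_const, ENNReal.mul_eq_top, measure_ne_top]) fun ω => ?_
  have hloc : LocallyIntegrable (w · ω) volume :=
    locallyIntegrable_of_norm_le (hw.comp_measurable measurable_prodMk_left).aestronglyMeasurable
      (hC · ω)
  filter_upwards [ae_restrict_of_ae hloc.ae_tendsto_backwardAverage] with t ht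
  have hdiff : Tendsto (fun h => w t ω - backwardAverage h (w · ω) t) (𝓝[>] 0) (𝓝 0) := by
    simpa using (tendsto_const_nhds (x := w t ω)).sub ht
  simpa [Function.comp_def] using (ENNReal.continuous_ofReal.tendsto _).comp (hdiff.norm.pow 2)

section Control

variable {V : Type*} [NormedSpace ℝ U] [MeasurableSpace U] [BorelSpace U]
  [NormedAddCommGroup V] [NormedSpace ℝ V] [MeasurableSpace V] [BorelSpace V]
  [SecondCountableTopology V]

lemma exists_bounded_control_backwardAverage {R : V →L[ℝ] U} (hR : DenseRange R)
    {w : ℝ → Ω → U} (hw : IsStronglyProgressive 𝓕 w) {E : Finset U} (hwE : ∀ t ω, w t ω ∈ E)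
    (hw0 : ∀ t < 0, ∀ ω, w t ω = 0) {h δ : ℝ} (hh : 0 ≤ h) (hδ : 0 < δ) :
    ∃ (α : ℝ → Ω → V) (n : ℕ), IsStronglyProgressive 𝓕 α ∧ (∀ t ω, ‖α t ω‖ ≤ n) ∧
      ∀ ω, ∀ t ≥ 0, ‖backwardAverage h (w · ω) t - ∫ s in (0 : ℝ)..t, R (α s ω)‖ ≤ δ * t := by
  classical
  obtain ⟨u, hu_def⟩ : ∃ u : ℝ → Ω → U, u = fun s ω => h⁻¹ • (w s ω - w (s - h) ω) := ⟨_, rfl⟩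
  have hu : IsStronglyProgressive 𝓕 u := hu_def ▸ fun i =>
    ((hw i).sub (hw.comp_sub_const hh i)).const_smul h⁻¹
  set D := (E ×ˢ E).image fun p : U × U => h⁻¹ • (p.1 - p.2)
  have huD (s : ℝ) (ω : Ω) : u s ω ∈ D := by
    rw [hu_def]
    exact Finset.mem_image.2 ⟨(w s ω, w (s - h) ω), Finset.mem_product.2 ⟨hwE s ω, hwE _ ω⟩, rfl⟩
  choose b hb using fun x : U => hR.exists_dist_lt x hδ
  obtain ⟨ρ, hρ, ⟨C, hC⟩, hρb⟩ := D.exists_measurable_bounded_eqOn b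
  have hα := hρ.comp_isStronglyProgressive hu
  refine ⟨fun s ω => ρ (u s ω), ⌈C⌉₊, hα, fun s ω => (hC _).trans (Nat.le_ceil C),
    fun ω t ht => ?_⟩
  have hw_int : ∀ a b, IntervalIntegrable (w · ω) volume a b :=
    intervalIntegrable_of_norm_le (hw.stronglyMeasurable_path ω) fun s =>
      Finset.single_le_sum (fun x _ => norm_nonneg x) (hwE s ω)
  have hu_int : IntervalIntegrable (u · ω) volume 0 t :=
    intervalIntegrable_of_norm_le (hu.stronglyMeasurable_path ω) (fun s =>
      Finset.single_le_sum (fun x _ => norm_nonneg x) (huD s ω)) 0 t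
  have hRα_int : IntervalIntegrable (fun s => R (ρ (u s ω))) volume 0 t :=
    intervalIntegrable_of_norm_le
      (R.continuous.comp_stronglyMeasurable (hα.stronglyMeasurable_path ω))
      (fun s => R.le_opNorm_of_le (hC _)) 0 t
  have hu_avg : ∫ s in (0 : ℝ)..t, u s ω = backwardAverage h (w · ω) t := by
    rw [hu_def]
    exact integral_inv_smul_sub_comp_sub hw_int (fun s hs => hw0 s hs ω) hh t
  rw [← hu_avg, ← intervalIntegral.integral_sub hu_int hRα_int]
  calc ‖∫ s in (0 : ℝ)..t, (u s ω - R (ρ (u s ω)))‖ ≤ δ * |t - 0| :=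
        intervalIntegral.norm_integral_le_of_norm_le_const fun s _ => by
          rw [hρb _ (huD s ω), ← dist_eq_norm]
          exact (hb _).le
    _ = δ * t := by rw [sub_zero, abs_of_nonneg ht]

lemma exists_bounded_control_meanSqDist_lt [IsProbabilityMeasure P]
    {R : V →L[ℝ] U} (hR : DenseRange R) {w : ℝ → Ω → U} (hw : IsStronglyProgressive 𝓕 w)
    {E : Finset U} (hwE : ∀ t ω, w t ω ∈ E) (hw0 : ∀ t < 0, ∀ ω, w t ω = 0) {h : ℝ} (hh : 0 ≤ h)
    {η : ℝ≥0∞} (hη : 0 < η) :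
    ∃ (α : ℝ → Ω → V) (n : ℕ), IsStronglyProgressive 𝓕 α ∧ (∀ t ω, ‖α t ω‖ ≤ n) ∧
      meanSqDist P T (fun t ω => backwardAverage h (w · ω) t)
        (fun t ω => ∫ s in (0 : ℝ)..t, R (α s ω)) < η := by
  have hlim : Tendsto (fun δ : ℝ => ENNReal.ofReal ((δ * T) ^ 2 * T)) (𝓝[>] 0) (𝓝 0) :=
    ((ENNReal.continuous_ofReal.comp (by fun_prop : Continuous fun δ : ℝ => (δ * T) ^ 2 * T)
      ).tendsto' 0 0 (by simp)).mono_left nhdsWithin_le_nhds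
  obtain ⟨δ, hδT, hδ⟩ := ((hlim.eventually_lt_const hη).and self_mem_nhdsWithin).exists
  obtain ⟨α, n, hα, hαn, hαw⟩ := exists_bounded_control_backwardAverage hR hw hwE hw0 hh hδ
  exact ⟨α, n, hα, hαn, (meanSqDist_le_of_norm_sub_le fun ω t ht =>
    (hαw ω t ht.1).trans (mul_le_mul_of_nonneg_left ht.2 hδ.le)).trans_lt hδT⟩

end Control

end Approximation

theorem stmt1_general
    {Ω U : Type*} {mΩ : MeasurableSpace Ω}
    [NormedAddCommGroup U] [InnerProductSpace ℝ U]
    [CompleteSpace U] [SecondCountableTopology U]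
    (P : Measure Ω) [IsProbabilityMeasure P]
    (𝓕 : Filtration ℝ mΩ)
    (T : ℝ)
    (R : U →L[ℝ] U) (hRdense : DenseRange (R : U → U))
    (v : ℝ → Ω → U) (hvprog : ProgMeasurable 𝓕 v)
    (hvint : ∫⁻ ω, (∫⁻ t in Set.Icc (0:ℝ) T, ENNReal.ofReal (‖v t ω‖ ^ 2)) ∂P ≠ ∞)
    (ε : ℝ) (hε : 0 < ε) :
    ∃ (α : ℝ → Ω → U) (n : ℕ),
      ProgMeasurable 𝓕 α ∧
      (∀ (t : ℝ) (ω : Ω), ‖α t ω‖ ≤ (n : ℝ)) ∧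
      ∫⁻ ω, (∫⁻ t in Set.Icc (0:ℝ) T,
          ENNReal.ofReal (‖v t ω - ∫ s in (0:ℝ)..t, R (α s ω)‖ ^ 2)) ∂P
        < ENNReal.ofReal ε := by
  borelize U
  have hv : IsStronglyProgressive 𝓕 v := hvprog
  have hη : 0 < ENNReal.ofReal (ε / 9) := ENNReal.ofReal_pos.2 (by positivity)
  obtain ⟨w, E, hw, hwE, hw0, hvw⟩ := exists_finiteValued_meanSqDist_lt hv hvint hη
  have hwm := hw.stronglyMeasurable_uncurry
  have hwC (t : ℝ) (ω : Ω) : ‖w t ω‖ ≤ ∑ x ∈ E, ‖x‖ :=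
    Finset.single_le_sum (fun x _ => norm_nonneg x) (hwE t ω)
  obtain ⟨h, hwh, hh⟩ := (((tendsto_meanSqDist_backwardAverage (P := P) (T := T)
    hwm hwC).eventually_lt_const hη).and self_mem_nhdsWithin).exists
  obtain ⟨α, n, hα, hαn, hαh⟩ :=
    exists_bounded_control_meanSqDist_lt (P := P) (T := T) hRdense hw hwE hw0 hh.le hη
  refine ⟨α, n, hα, hαn, ?_⟩
  calc meanSqDist P T v (fun t ω => ∫ s in (0 : ℝ)..t, R (α s ω))
      ≤ 3 * (meanSqDist P T v w + meanSqDist P T w (fun t ω => backwardAverage h (w · ω) t)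
          + meanSqDist P T (fun t ω => backwardAverage h (w · ω) t)
            (fun t ω => ∫ s in (0 : ℝ)..t, R (α s ω))) :=
        meanSqDist_le_three_mul (hv.stronglyMeasurable_uncurry.sub hwm).measurable
          (hwm.sub (stronglyMeasurable_backwardAverage hwm hwC h)).measurable
    _ < 3 * (ENNReal.ofReal (ε / 9) + ENNReal.ofReal (ε / 9) + ENNReal.ofReal (ε / 9)) :=
        (ENNReal.mul_lt_mul_iff_right (by simp) (by simp)).2
          (ENNReal.add_lt_add (ENNReal.add_lt_add hvw hwh) hαh)
    _ = ENNReal.ofReal ε := by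
      rw [← ENNReal.ofReal_add (by positivity) (by positivity),
        ← ENNReal.ofReal_add (by positivity) (by positivity), ← ENNReal.ofReal_ofNat 3,
        ← ENNReal.ofReal_mul (by norm_num)]
      ring_nf

/-- Step 4 of the proof of Proposition 3.2: the linear space of processes of the form
`t ↦ ∫_0^t R α_s ds`, with `α` progressively measurable and uniformly bounded, is dense
in the space of square-integrable progressively measurable `U`-valued processes on `[0,T]`,
where `R : U → U` is an injective bounded linear operator with dense range on a real
separable Hilbert space `U`. -/
theorem stmt1
    {Ω U : Type*} {mΩ : MeasurableSpace Ω}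
    [NormedAddCommGroup U] [InnerProductSpace ℝ U]
    [CompleteSpace U] [SecondCountableTopology U]
    (P : Measure Ω) [IsProbabilityMeasure P]
    (𝓕 : Filtration ℝ mΩ)
    (T : ℝ) (hT : 0 < T)
    (R : U →L[ℝ] U) (hRinj : Function.Injective R) (hRdense : DenseRange (R : U → U))
    (v : ℝ → Ω → U) (hvprog : ProgMeasurable 𝓕 v)
    (hvint : ∫⁻ ω, (∫⁻ t in Set.Icc (0:ℝ) T, ENNReal.ofReal (‖v t ω‖ ^ 2)) ∂P ≠ ∞)
    (ε : ℝ) (hε : 0 < ε) :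
    ∃ (α : ℝ → Ω → U) (n : ℕ),
      ProgMeasurable 𝓕 α ∧
      (∀ (t : ℝ) (ω : Ω), ‖α t ω‖ ≤ (n : ℝ)) ∧
      ∫⁻ ω, (∫⁻ t in Set.Icc (0:ℝ) T,
          ENNReal.ofReal (‖v t ω - ∫ s in (0:ℝ)..t, R (α s ω)‖ ^ 2)) ∂P
        < ENNReal.ofReal ε :=
  stmt1_general P 𝓕 T R hRdense v hvprog hvint ε hε
end

section
/- Let (Ω, F, P) be a probability space with a filtration (F_t)_{t∈[0,T]}, U a real separable Hilbert space, R : U → U a bounded linear operator, t₀ ∈ [0,T), and ζ : Ω → U a bounded F_{t₀}-measurable random variable; set η := R ∘ ζ. For n ≥ 1 define α^n_s := n·1_{(t₀, t₀+1/n]}(s)·ζ. Then each α^n is a progressively measurable, uniformly bounded U-valued process, ∫_0^t R α^n_s ds = min(n·(t−t₀)⁺, 1)·η for every t ∈ [0,T], and E∫_0^T ‖η·1_{[t₀,T)}(t) − ∫_0^t R α^n_s ds‖² dt ≤ (1/n)·E‖η‖²; in particular the left-hand side tends to 0 as n → ∞. -/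
open MeasureTheory Filter Set
open scoped ENNReal NNReal Topology

/-!
On `(t₀, t₀ + 1/n]` the control `α^n` feeds `R ζ = η` in at rate `n`, so `∫_0^t R α^n` is
`ramp n t₀ t • η`, where `ramp` rises linearly from `0` at `t₀` to `1` at `t₀ + 1/n`. The squared
distance to `η 1_{[t₀,T)}(t)` is therefore `(1_{[t₀,T)}(t) - ramp)² ‖η‖²`, and the scalar factor is
at most `1` and vanishes off `[t₀, t₀ + 1/n)`, an interval of length `1/n`.
-/

noncomputable def ramp (a t₀ t : ℝ) : ℝ := min (a * max (t - t₀) 0) 1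

lemma max_min_sub_mul_eq_ramp {a : ℝ} (ha : 0 < a) (t₀ t : ℝ) :
    max (min t (t₀ + 1 / a) - t₀) 0 * a = ramp a t₀ t := by
  rw [← min_sub_sub_right, add_sub_cancel_left, max_min_distrib_right,
    max_eq_left (one_div_pos.2 ha).le, min_mul_of_nonneg _ _ ha.le, one_div_mul_cancel ha.ne',
    mul_comm, ramp]

lemma ramp_eq_one {a t₀ t : ℝ} (ha : 0 < a) (ht : t₀ + 1 / a ≤ t) : ramp a t₀ t = 1 := by
  rw [← max_min_sub_mul_eq_ramp ha, min_eq_right ht, add_sub_cancel_left,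
    max_eq_left (one_div_pos.2 ha).le, one_div_mul_cancel ha.ne']

lemma ramp_eq_zero {a t₀ t : ℝ} (ht : t ≤ t₀) : ramp a t₀ t = 0 := by
  simp [ramp, ht]

lemma ramp_mem_Icc {a : ℝ} (ha : 0 ≤ a) (t₀ t : ℝ) : ramp a t₀ t ∈ Icc 0 1 :=
  ⟨le_min (by positivity) zero_le_one, min_le_right _ _⟩

theorem intervalIntegral_indicator_Ioc_const_eq_ramp {E : Type*} [NormedAddCommGroup E]
    [NormedSpace ℝ E] [CompleteSpace E] {a t₀ t : ℝ} (ha : 0 < a) (ht₀ : 0 ≤ t₀) (ht : 0 ≤ t)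
    (v : E) :
    ∫ s in (0:ℝ)..t, (Ioc t₀ (t₀ + 1 / a)).indicator (fun _ => a • v) s = ramp a t₀ t • v := by
  rw [intervalIntegral.integral_of_le ht, setIntegral_indicator measurableSet_Ioc,
    setIntegral_const, Ioc_inter_Ioc, max_eq_right ht₀, Real.volume_real_Ioc, smul_smul,
    max_min_sub_mul_eq_ramp ha]

lemma sq_indicator_Ico_sub_ramp_le {a t₀ T t : ℝ} (ha : 0 < a) (ht : t < T) :
    ((Ico t₀ T).indicator 1 t - ramp a t₀ t) ^ 2 ≤ (Ico t₀ (t₀ + 1 / a)).indicator 1 t := by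
  rcases lt_or_ge t t₀ with h | h
  · simp [h.not_ge, ramp_eq_zero h.le]
  rcases lt_or_ge t (t₀ + 1 / a) with h' | h'
  · obtain ⟨h0, h1⟩ := ramp_mem_Icc ha.le t₀ t
    simp only [indicator_of_mem (show t ∈ Ico t₀ T from ⟨h, ht⟩),
      indicator_of_mem (show t ∈ Ico t₀ (t₀ + 1 / a) from ⟨h, h'⟩), Pi.one_apply]
    nlinarith
  · simp [indicator_of_mem (show t ∈ Ico t₀ T from ⟨h, ht⟩), ramp_eq_one ha h',
      indicator_nonneg]

lemma setIntegral_sq_indicator_Ico_sub_ramp_le {a : ℝ} (ha : 0 < a) (t₀ S T : ℝ) :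
    ∫ t in Icc S T, ((Ico t₀ T).indicator 1 t - ramp a t₀ t) ^ 2 ≤ 1 / a := by
  have hint : Integrable ((Ico t₀ (t₀ + 1 / a)).indicator (1 : ℝ → ℝ)) :=
    (integrable_indicator_iff measurableSet_Ico).2 (integrableOn_const (by simp))
  calc ∫ t in Icc S T, ((Ico t₀ T).indicator 1 t - ramp a t₀ t) ^ 2
      = ∫ t in Ico S T, ((Ico t₀ T).indicator 1 t - ramp a t₀ t) ^ 2 :=
        integral_Icc_eq_integral_Ico
    _ ≤ ∫ t in Ico S T, (Ico t₀ (t₀ + 1 / a)).indicator 1 t :=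
        integral_mono_of_nonneg (.of_forall fun _ => sq_nonneg _) hint.integrableOn
          ((ae_restrict_mem measurableSet_Ico).mono fun _ ht =>
            sq_indicator_Ico_sub_ramp_le ha ht.2)
    _ ≤ ∫ t, (Ico t₀ (t₀ + 1 / a)).indicator 1 t :=
        setIntegral_le_integral hint (.of_forall (indicator_nonneg fun _ _ => zero_le_one))
    _ = 1 / a := by
        rw [integral_indicator_one measurableSet_Ico, Real.volume_real_Ico, add_sub_cancel_left,
          max_eq_left (one_div_pos.2 ha).le]

lemma integral_norm_indicator_sub_smul_sq {α E : Type*} [MeasurableSpace α] [NormedAddCommGroup E]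
    [NormedSpace ℝ E] (μ : Measure α) (S : Set α) (f : α → ℝ) (v : E) :
    ∫ t, ‖S.indicator (fun _ => v) t - f t • v‖ ^ 2 ∂μ
      = (∫ t, (S.indicator 1 t - f t) ^ 2 ∂μ) * ‖v‖ ^ 2 := by
  rw [← integral_mul_const]
  congr 1 with t
  have h : S.indicator (fun _ => v) t = S.indicator (1 : α → ℝ) t • v := by
    by_cases ht : t ∈ S <;> simp [ht]
  rw [h, ← sub_smul, norm_smul, mul_pow, Real.norm_eq_abs, sq_abs]

theorem isStronglyProgressive_indicator_const_of_subset_Ioi {ι Ω E : Type*} [LinearOrder ι]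
    [MeasurableSpace ι] {m : MeasurableSpace Ω} [TopologicalSpace E] [Zero E]
    (𝓕 : Filtration ι m) {S : Set ι} (hS : MeasurableSet S) {t₀ : ι} (hSt₀ : S ⊆ Ioi t₀)
    {ξ : Ω → E} (hξ : StronglyMeasurable[𝓕 t₀] ξ) :
    IsStronglyProgressive 𝓕 fun s ω => S.indicator (fun _ => ξ ω) s := by
  intro i
  rcases le_or_gt i t₀ with hi | hi
  · have hnotMem : ∀ p : Iic i × Ω, (p.1 : ι) ∉ S := fun p hp =>
      (hSt₀ hp).not_ge (p.1.2.trans hi)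
    simp only [indicator_of_notMem (hnotMem _)]
    exact stronglyMeasurable_const
  · exact ((hξ.mono (𝓕.mono hi.le)).comp_measurable measurable_snd).indicator
      (hS.preimage (measurable_subtype_coe.comp measurable_fst))

theorem stmt2_general
    {Ω U : Type*} {mΩ : MeasurableSpace Ω}
    [NormedAddCommGroup U] [InnerProductSpace ℝ U]
    [CompleteSpace U]
    (P : Measure Ω)
    (𝓕 : Filtration ℝ mΩ)
    (T t₀ : ℝ) (ht₀ : t₀ ∈ Set.Ico (0:ℝ) T)
    (R : U →L[ℝ] U)
    (ζ : Ω → U) (hζmeas : StronglyMeasurable[𝓕 t₀] ζ)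
    (Cζ : ℝ) (hζbdd : ∀ ω, ‖ζ ω‖ ≤ Cζ)
    (η : Ω → U) (hη : η = fun ω => R (ζ ω))
    (n : ℕ) (hn : 1 ≤ n)
    (α : ℝ → Ω → U)
    (hα : α = fun s ω =>
      Set.indicator (Set.Ioc t₀ (t₀ + 1 / (n : ℝ))) (fun _ => (n : ℝ) • ζ ω) s) :
    ProgMeasurable 𝓕 α ∧
    (∃ C : ℝ, ∀ (s : ℝ) (ω : Ω), ‖α s ω‖ ≤ C) ∧
    (∀ t ∈ Set.Icc (0:ℝ) T, ∀ ω : Ω,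
      (∫ s in (0:ℝ)..t, R (α s ω)) = min ((n : ℝ) * max (t - t₀) 0) 1 • η ω) ∧
    (∫ ω, (∫ t in Set.Icc (0:ℝ) T,
        ‖Set.indicator (Set.Ico t₀ T) (fun _ => η ω) t - ∫ s in (0:ℝ)..t, R (α s ω)‖ ^ 2) ∂P
      ≤ (1 / (n : ℝ)) * ∫ ω, ‖η ω‖ ^ 2 ∂P) := by
  have hn₀ : (0 : ℝ) < n := by exact_mod_cast hn
  have hRα : ∀ ω, (fun s => R (α s ω))
      = (Ioc t₀ (t₀ + 1 / (n : ℝ))).indicator (fun _ => (n : ℝ) • η ω) := fun ω => by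
    rw [hα, hη, ← R.map_smul]
    exact (indicator_comp_of_zero (map_zero R)).symm
  have hramp : ∀ t ∈ Icc (0 : ℝ) T, ∀ ω, ∫ s in (0:ℝ)..t, R (α s ω) = ramp n t₀ t • η ω :=
    fun t ht ω => by rw [hRα, intervalIntegral_indicator_Ioc_const_eq_ramp hn₀ ht₀.1 ht.1]
  refine ⟨hα ▸ isStronglyProgressive_indicator_const_of_subset_Ioi 𝓕 measurableSet_Ioc
      Ioc_subset_Ioi_self (hζmeas.const_smul _), ⟨n * Cζ, fun s ω => ?_⟩, hramp, ?_⟩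
  · rw [hα]
    refine (norm_indicator_le_norm_self _ _).trans ?_
    rw [norm_smul, Real.norm_natCast]
    gcongr
    exact hζbdd ω
  · have hdefect : ∀ ω, ∫ t in Icc 0 T,
          ‖(Ico t₀ T).indicator (fun _ => η ω) t - ∫ s in (0:ℝ)..t, R (α s ω)‖ ^ 2
        = (∫ t in Icc 0 T, ((Ico t₀ T).indicator 1 t - ramp n t₀ t) ^ 2) * ‖η ω‖ ^ 2 :=
      fun ω => by
        rw [← integral_norm_indicator_sub_smul_sq]
        exact setIntegral_congr_fun measurableSet_Icc fun t ht => by simp only [hramp t ht ω]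
    simp only [hdefect, integral_const_mul]
    exact mul_le_mul_of_nonneg_right (setIntegral_sq_indicator_Ico_sub_ramp_le hn₀ _ _ _)
      (integral_nonneg fun _ => sq_nonneg _)

/-- The explicit construction in Step 4 of the proof of Proposition 3.2: for a bounded
`F_{t₀}`-measurable random variable `ζ` with `η := R ∘ ζ`, the processes
`α^n_s := n · 1_{(t₀, t₀+1/n]}(s) · ζ` are progressively measurable and uniformly bounded,
`∫_0^t R α^n_s ds = min(n (t - t₀)⁺, 1) • η` on `[0,T]`, and
`E ∫_0^T ‖η 1_{[t₀,T)}(t) - ∫_0^t R α^n_s ds‖² dt ≤ (1/n) E ‖η‖²`. -/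
theorem stmt2
    {Ω U : Type*} {mΩ : MeasurableSpace Ω}
    [NormedAddCommGroup U] [InnerProductSpace ℝ U]
    [CompleteSpace U] [SecondCountableTopology U]
    (P : Measure Ω) [IsProbabilityMeasure P]
    (𝓕 : Filtration ℝ mΩ)
    (T t₀ : ℝ) (ht₀ : t₀ ∈ Set.Ico (0:ℝ) T)
    (R : U →L[ℝ] U)
    (ζ : Ω → U) (hζmeas : StronglyMeasurable[𝓕 t₀] ζ)
    (Cζ : ℝ) (hζbdd : ∀ ω, ‖ζ ω‖ ≤ Cζ)
    (η : Ω → U) (hη : η = fun ω => R (ζ ω))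
    (n : ℕ) (hn : 1 ≤ n)
    (α : ℝ → Ω → U)
    (hα : α = fun s ω =>
      Set.indicator (Set.Ioc t₀ (t₀ + 1 / (n : ℝ))) (fun _ => (n : ℝ) • ζ ω) s) :
    ProgMeasurable 𝓕 α ∧
    (∃ C : ℝ, ∀ (s : ℝ) (ω : Ω), ‖α s ω‖ ≤ C) ∧
    (∀ t ∈ Set.Icc (0:ℝ) T, ∀ ω : Ω,
      (∫ s in (0:ℝ)..t, R (α s ω)) = min ((n : ℝ) * max (t - t₀) 0) 1 • η ω) ∧
    (∫ ω, (∫ t in Set.Icc (0:ℝ) T,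
        ‖Set.indicator (Set.Ico t₀ T) (fun _ => η ω) t - ∫ s in (0:ℝ)..t, R (α s ω)‖ ^ 2) ∂P
      ≤ (1 / (n : ℝ)) * ∫ ω, ‖η ω‖ ^ 2 ∂P) :=
  stmt2_general P 𝓕 T t₀ ht₀ R ζ hζmeas Cζ hζbdd η hη n hn α hα
end

section
/- Let H and U be real separable Hilbert spaces, T > 0, (Ω, F, P) a probability space, and let S : [0,T] → L(H,H) be a family of bounded linear operators with ‖S(t)‖_{L(H,H)} ≤ 1 for all t ∈ [0,T] and such that t ↦ S(t)y is continuous for every y ∈ H. Let F : H × U → H be continuous with ‖F(y,a)‖ ≤ C_F·(1 + ‖y‖) and ‖F(y,a) − F(y′,a)‖ ≤ L_F·‖y − y′‖ for all y, y′ ∈ H and a ∈ U. Let u^n, u : Ω × [0,T] → U be measurable processes such that u^n → u in P ⊗ dt-measure, and let X^n, X : Ω × [0,T] → H be processes with continuous paths such that E[sup_{t∈[0,T]} ‖X_t‖²] < ∞ and, P-almost surely, X^n_t − X_t = ∫_0^t S(t−s)·(F(X^n_s, u^n_s) − F(X_s, u_s)) ds for all t ∈ [0,T]. Then E[sup_{t∈[0,T]}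 ‖X^n_t − X_t‖²] → 0 as n → ∞. -/
open MeasureTheory Filter Set
open scoped ENNReal NNReal Topology

/-!
Subtracting the two mild equations and splitting
`F(Xⁿ, uⁿ) - F(X, u) = (F(Xⁿ, uⁿ) - F(X, uⁿ)) + (F(X, uⁿ) - F(X, u))`, the contractivity of `S`
and the Lipschitz bound give `‖Xⁿ_t - X_t‖ ≤ gₙ + L ∫₀ᵗ ‖Xⁿ_s - X_s‖ ds` with
`gₙ = ∫₀ᵀ ‖F(X_s, uⁿ_s) - F(X_s, u_s)‖ ds`, so Gronwall yields `sup_t ‖Xⁿ_t - X_t‖ ≤ gₙ e^{LT}`.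
It remains to show `E[gₙ²] → 0`. Every subsequence of `uⁿ` has a further subsequence converging
`P ⊗ dt`-a.e.; along it, dominated convergence in `t` (bound `2C(1 + ‖X_t‖)`) gives `gₙ → 0` for
a.e. `ω`, and dominated convergence in `ω` (bound `8C²T²(1 + sup_t ‖X_t‖²)`) gives `E[gₙ²] → 0`.
-/

theorem le_mul_exp_of_le_add_mul_integral {φ : ℝ → ℝ} {T a L : ℝ} (ha : 0 ≤ a) (hL : 0 ≤ L)
    (hφ : ContinuousOn φ (Icc 0 T)) (hφ_nonneg : ∀ t ∈ Icc 0 T, 0 ≤ φ t)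
    (hle : ∀ t ∈ Icc 0 T, φ t ≤ a + L * ∫ s in 0..t, φ s) :
    ∀ t ∈ Icc 0 T, φ t ≤ a * Real.exp (L * t) := by
  rcases lt_or_ge T 0 with hT | hT
  · simp [Icc_eq_empty_of_lt hT]
  -- Extend `φ` continuously to `ℝ`, so that `a + L ∫₀ᵗ φ` is differentiable everywhere.
  set ψ : ℝ → ℝ := fun t => φ (projIcc 0 T hT t)
  have hψ : Continuous ψ := hφ.comp_continuous (continuous_subtype_val.comp continuous_projIcc)
    fun t => (projIcc 0 T hT t).2
  have hψφ : ∀ t ∈ Icc 0 T, ψ t = φ t := fun t ht => by simp [ψ, projIcc_of_mem hT ht]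
  have hint : ∀ t ∈ Icc 0 T, ∫ s in 0..t, ψ s = ∫ s in 0..t, φ s := fun t ht =>
    intervalIntegral.integral_congr fun s hs => by
      rw [uIcc_of_le ht.1] at hs
      exact hψφ s ⟨hs.1, hs.2.trans ht.2⟩
  set f : ℝ → ℝ := fun t => a + L * ∫ s in 0..t, ψ s
  have hf : ∀ t, HasDerivAt f (L * ψ t) t := fun t =>
    ((hψ.integral_hasStrictDerivAt 0 t).hasDerivAt.const_mul L).const_add a
  have hf_nonneg : ∀ t ∈ Icc 0 T, 0 ≤ f t := fun t ht => by
    have : 0 ≤ ∫ s in 0..t, ψ s := intervalIntegral.integral_nonneg ht.1 fun s hs =>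
      (hψφ s ⟨hs.1, hs.2.trans ht.2⟩).symm ▸ hφ_nonneg s ⟨hs.1, hs.2.trans ht.2⟩
    positivity
  have hφf : ∀ t ∈ Icc 0 T, φ t ≤ f t := fun t ht => by
    simpa only [f, hint t ht] using hle t ht
  have hgron := norm_le_gronwallBound_of_norm_deriv_right_le (f := f) (a := 0) (b := T)
    (δ := a) (K := L) (ε := 0)
    (fun t _ => (hf t).continuousAt.continuousWithinAt) (fun t _ => (hf t).hasDerivWithinAt)
    (by simp [f, abs_of_nonneg ha]) fun t ht => by
      have ht' : t ∈ Icc 0 T := Ico_subset_Icc_self ht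
      rw [Real.norm_of_nonneg (mul_nonneg hL ((hψφ t ht').symm ▸ hφ_nonneg t ht')),
        Real.norm_of_nonneg (hf_nonneg t ht'), add_zero, hψφ t ht']
      exact mul_le_mul_of_nonneg_left (hφf t ht') hL
  intro t ht
  have := hgron t ht
  rw [gronwallBound_ε0, sub_zero, Real.norm_of_nonneg (hf_nonneg t ht)] at this
  exact (hφf t ht).trans this

section

variable {H U : Type*} [NormedAddCommGroup H]

noncomputable def driftGap (F : H → U → H) (T : ℝ) (y : ℝ → H) (v w : ℝ → U) : ℝ :=
  ∫ s in Icc 0 T, ‖F (y s) (v s) - F (y s) (w s)‖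

theorem driftGap_nonneg (F : H → U → H) (T : ℝ) (y : ℝ → H) (v w : ℝ → U) :
    0 ≤ driftGap F T y v w :=
  integral_nonneg fun _ => norm_nonneg _

theorem norm_sub_le_driftGap_mul_exp [NormedSpace ℝ H] {S : ℝ → H →L[ℝ] H} {F : H → U → H}
    {T L : ℝ} {x y : ℝ → H} {v w : ℝ → U} (hS : ∀ t ∈ Icc 0 T, ‖S t‖ ≤ 1) (hL : 0 ≤ L)
    (hF : ∀ (y y' : H) (a : U), ‖F y a - F y' a‖ ≤ L * ‖y - y'‖)
    (hx : ContinuousOn x (Icc 0 T)) (hy : ContinuousOn y (Icc 0 T))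
    (hgap : IntegrableOn (fun s => ‖F (y s) (v s) - F (y s) (w s)‖) (Icc 0 T))
    (hmild : ∀ t ∈ Icc 0 T,
      x t - y t = ∫ s in 0..t, S (t - s) (F (x s) (v s) - F (y s) (w s))) :
    ∀ t ∈ Icc 0 T, ‖x t - y t‖ ≤ driftGap F T y v w * Real.exp (L * t) := by
  set ψ : ℝ → ℝ := fun s => ‖F (y s) (v s) - F (y s) (w s)‖
  have hxy : ContinuousOn (fun t => ‖x t - y t‖) (Icc 0 T) := (hx.sub hy).norm
  refine le_mul_exp_of_le_add_mul_integral (driftGap_nonneg F T y v w) hL hxy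
    (fun _ _ => norm_nonneg _) fun t ht => ?_
  have hsub : Icc 0 t ⊆ Icc 0 T := Icc_subset_Icc_right ht.2
  have hψ : IntervalIntegrable ψ volume 0 t :=
    (intervalIntegrable_iff_integrableOn_Icc_of_le ht.1).2 (hgap.mono_set hsub)
  have hxy_int : IntervalIntegrable (fun s => ‖x s - y s‖) volume 0 t :=
    (hxy.mono hsub).intervalIntegrable_of_Icc ht.1
  have hpointwise : ∀ s ∈ Ioc 0 t,
      ‖S (t - s) (F (x s) (v s) - F (y s) (w s))‖ ≤ L * ‖x s - y s‖ + ψ s := fun s hs => by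
    have hts : t - s ∈ Icc 0 T := ⟨sub_nonneg.2 hs.2, by linarith [hs.1, ht.2]⟩
    calc ‖S (t - s) (F (x s) (v s) - F (y s) (w s))‖
        ≤ ‖F (x s) (v s) - F (y s) (w s)‖ :=
          (S (t - s)).le_of_opNorm_le (hS _ hts) _ |>.trans_eq (one_mul _)
      _ = ‖(F (x s) (v s) - F (y s) (v s)) + (F (y s) (v s) - F (y s) (w s))‖ := by
          rw [sub_add_sub_cancel]
      _ ≤ L * ‖x s - y s‖ + ψ s := (norm_add_le _ _).trans (add_le_add (hF _ _ _) le_rfl)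
  have hψ_le : ∫ s in 0..t, ψ s ≤ driftGap F T y v w := by
    rw [intervalIntegral.integral_of_le ht.1]
    exact setIntegral_mono_set hgap (Eventually.of_forall fun _ => norm_nonneg _)
      (Ioc_subset_Icc_self.trans hsub).eventuallyLE
  calc ‖x t - y t‖
      ≤ ∫ s in 0..t, (L * ‖x s - y s‖ + ψ s) := by
        rw [hmild t ht]
        exact intervalIntegral.norm_integral_le_of_norm_le ht.1
          (Eventually.of_forall hpointwise) ((hxy_int.const_mul L).add hψ)
    _ = L * (∫ s in 0..t, ‖x s - y s‖) + ∫ s in 0..t, ψ s := by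
        rw [intervalIntegral.integral_add (hxy_int.const_mul L) hψ,
          intervalIntegral.integral_const_mul]
    _ ≤ driftGap F T y v w + L * ∫ s in 0..t, ‖x s - y s‖ := by linarith

theorem iSup_ofReal_norm_sub_sq_le [NormedSpace ℝ H] {S : ℝ → H →L[ℝ] H} {F : H → U → H}
    {T L : ℝ} {x y : ℝ → H} {v w : ℝ → U} (hS : ∀ t ∈ Icc 0 T, ‖S t‖ ≤ 1) (hL : 0 ≤ L)
    (hF : ∀ (y y' : H) (a : U), ‖F y a - F y' a‖ ≤ L * ‖y - y'‖)
    (hx : ContinuousOn x (Icc 0 T)) (hy : ContinuousOn y (Icc 0 T))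
    (hgap : IntegrableOn (fun s => ‖F (y s) (v s) - F (y s) (w s)‖) (Icc 0 T))
    (hmild : ∀ t ∈ Icc 0 T,
      x t - y t = ∫ s in 0..t, S (t - s) (F (x s) (v s) - F (y s) (w s))) :
    ⨆ t ∈ Icc 0 T, ENNReal.ofReal (‖x t - y t‖ ^ 2)
      ≤ ENNReal.ofReal (Real.exp (L * T) ^ 2) * ENNReal.ofReal (driftGap F T y v w ^ 2) := by
  refine iSup₂_le fun t ht => ?_
  rw [← ENNReal.ofReal_mul (sq_nonneg _), ← mul_pow]
  gcongr
  calc ‖x t - y t‖ ≤ driftGap F T y v w * Real.exp (L * t) :=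
        norm_sub_le_driftGap_mul_exp hS hL hF hx hy hgap hmild t ht
    _ ≤ Real.exp (L * T) * driftGap F T y v w := by
        rw [mul_comm]
        gcongr
        · exact driftGap_nonneg F T y v w
        · exact ht.2

theorem norm_sub_le_of_linear_growth {F : H → U → H} {C : ℝ}
    (hF : ∀ (y : H) (a : U), ‖F y a‖ ≤ C * (1 + ‖y‖)) (y : H) (a b : U) :
    ‖F y a - F y b‖ ≤ 2 * C * (1 + ‖y‖) := by
  linarith [norm_sub_le (F y a) (F y b), hF y a, hF y b]

theorem driftGap_le {F : H → U → H} {C T M : ℝ} (hC : 0 ≤ C) (hT : 0 ≤ T)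
    (hF : ∀ (y : H) (a : U), ‖F y a‖ ≤ C * (1 + ‖y‖)) {y : ℝ → H}
    (hM : ∀ s ∈ Icc 0 T, ‖y s‖ ≤ M) (v w : ℝ → U) :
    driftGap F T y v w ≤ 2 * C * (1 + M) * T := by
  calc driftGap F T y v w ≤ ∫ _ in Icc 0 T, 2 * C * (1 + M) := by
        refine integral_mono_of_nonneg (Eventually.of_forall fun _ => norm_nonneg _)
          (integrableOn_const (by simp)) ?_
        filter_upwards [self_mem_ae_restrict measurableSet_Icc] with s hs
        exact (norm_sub_le_of_linear_growth hF _ _ _).trans (by gcongr; exact hM s hs)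
    _ = 2 * C * (1 + M) * T := by
        rw [setIntegral_const, Real.volume_real_Icc_of_le hT, sub_zero, smul_eq_mul, mul_comm]

theorem ofReal_driftGap_sq_le {F : H → U → H} {C T : ℝ} (hC : 0 ≤ C) (hT : 0 ≤ T)
    (hF : ∀ (y : H) (a : U), ‖F y a‖ ≤ C * (1 + ‖y‖)) {y : ℝ → H}
    (hy : ContinuousOn y (Icc 0 T)) (v w : ℝ → U) :
    ENNReal.ofReal (driftGap F T y v w ^ 2)
      ≤ ENNReal.ofReal (8 * C ^ 2 * T ^ 2) * (1 + ⨆ t ∈ Icc 0 T, ENNReal.ofReal (‖y t‖ ^ 2)) := by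
  obtain ⟨t₀, ht₀, hmax⟩ := isCompact_Icc.exists_isMaxOn (nonempty_Icc.2 hT) hy.norm
  have hgap := driftGap_le hC hT hF (M := ‖y t₀‖) (fun s hs => hmax hs) v w
  have hsq : driftGap F T y v w ^ 2 ≤ 8 * C ^ 2 * T ^ 2 * (1 + ‖y t₀‖ ^ 2) := by
    have := pow_le_pow_left₀ (driftGap_nonneg F T y v w) hgap 2
    nlinarith [sq_nonneg (‖y t₀‖ - 1), sq_nonneg (C * T)]
  calc ENNReal.ofReal (driftGap F T y v w ^ 2)
      ≤ ENNReal.ofReal (8 * C ^ 2 * T ^ 2) * (1 + ENNReal.ofReal (‖y t₀‖ ^ 2)) := by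
        rw [← ENNReal.ofReal_one, ← ENNReal.ofReal_add zero_le_one (sq_nonneg _),
          ← ENNReal.ofReal_mul (by positivity)]
        exact ENNReal.ofReal_le_ofReal hsq
    _ ≤ _ := by
        gcongr
        exact le_iSup₂ (f := fun t (_ : t ∈ Icc 0 T) => ENNReal.ofReal (‖y t‖ ^ 2)) t₀ ht₀

section Measurable

variable [TopologicalSpace U] {F : H → U → H} {C T : ℝ}

theorem integrableOn_norm_sub_of_linear_growth (hFcont : Continuous (Function.uncurry F))
    (hF : ∀ (y : H) (a : U), ‖F y a‖ ≤ C * (1 + ‖y‖)) {y : ℝ → H} {v w : ℝ → U}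
    (hy : ContinuousOn y (Icc 0 T)) (hv : AEStronglyMeasurable v (volume.restrict (Icc 0 T)))
    (hw : AEStronglyMeasurable w (volume.restrict (Icc 0 T))) :
    IntegrableOn (fun s => ‖F (y s) (v s) - F (y s) (w s)‖) (Icc 0 T) := by
  have hy' : AEStronglyMeasurable y (volume.restrict (Icc 0 T)) :=
    hy.aestronglyMeasurable measurableSet_Icc
  refine Integrable.mono' (g := fun s => 2 * C * (1 + ‖y s‖))
    (continuousOn_const.mul (continuousOn_const.add hy.norm)).integrableOn_Icc
    ((hFcont.comp_aestronglyMeasurable (hy'.prodMk hv)).sub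
      (hFcont.comp_aestronglyMeasurable (hy'.prodMk hw))).norm ?_
  exact Eventually.of_forall fun s =>
    (norm_norm _).trans_le (norm_sub_le_of_linear_growth hF _ _ _)

theorem tendsto_driftGap_zero (hFcont : Continuous (Function.uncurry F))
    (hF : ∀ (y : H) (a : U), ‖F y a‖ ≤ C * (1 + ‖y‖)) {y : ℝ → H} {v : ℕ → ℝ → U} {w : ℝ → U}
    (hy : ContinuousOn y (Icc 0 T))
    (hv : ∀ k, AEStronglyMeasurable (v k) (volume.restrict (Icc 0 T)))
    (hw : AEStronglyMeasurable w (volume.restrict (Icc 0 T)))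
    (hconv : ∀ᵐ s ∂volume.restrict (Icc 0 T), Tendsto (fun k => v k s) atTop (𝓝 (w s))) :
    Tendsto (fun k => driftGap F T y (v k) w) atTop (𝓝 0) := by
  have hy' : AEStronglyMeasurable y (volume.restrict (Icc 0 T)) :=
    hy.aestronglyMeasurable measurableSet_Icc
  have h := tendsto_integral_of_dominated_convergence (μ := volume.restrict (Icc 0 T))
    (F := fun k s => ‖F (y s) (v k s) - F (y s) (w s)‖) (f := fun _ => 0)
    (fun s => 2 * C * (1 + ‖y s‖))
    (fun k => ((hFcont.comp_aestronglyMeasurable (hy'.prodMk (hv k))).sub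
      (hFcont.comp_aestronglyMeasurable (hy'.prodMk hw))).norm)
    (continuousOn_const.mul (continuousOn_const.add hy.norm)).integrableOn_Icc
    (fun k => Eventually.of_forall fun s =>
      (norm_norm _).trans_le (norm_sub_le_of_linear_growth hF _ _ _)) ?_
  · simpa only [driftGap, integral_zero] using h
  filter_upwards [hconv] with s hs
  have hFs : Continuous (F (y s)) := hFcont.comp (continuous_const.prodMk continuous_id)
  simpa using (((hFs.tendsto _).comp hs).sub_const (F (y s) (w s))).norm

theorem stronglyMeasurable_driftGap {Ω : Type*} {mΩ : MeasurableSpace Ω}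
    (hFcont : Continuous (Function.uncurry F)) {X : ℝ → Ω → H} {v w : ℝ → Ω → U}
    (hX : StronglyMeasurable (Function.uncurry X)) (hv : StronglyMeasurable (Function.uncurry v))
    (hw : StronglyMeasurable (Function.uncurry w)) :
    StronglyMeasurable fun ω => driftGap F T (X · ω) (v · ω) (w · ω) := by
  have hX' : StronglyMeasurable fun p : Ω × ℝ => X p.2 p.1 := hX.comp_measurable measurable_swap
  have hv' : StronglyMeasurable fun p : Ω × ℝ => v p.2 p.1 := hv.comp_measurable measurable_swap
  have hw' : StronglyMeasurable fun p : Ω × ℝ => w p.2 p.1 := hw.comp_measurable measurable_swap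
  exact ((hFcont.comp_stronglyMeasurable (hX'.prodMk hv')).sub
    (hFcont.comp_stronglyMeasurable (hX'.prodMk hw'))).norm.integral_prod_right'

end Measurable

theorem tendsto_lintegral_driftGap_sq [PseudoEMetricSpace U] {Ω : Type*} {mΩ : MeasurableSpace Ω}
    {P : Measure Ω} [IsFiniteMeasure P] {F : H → U → H} {C T : ℝ} (hC : 0 ≤ C) (hT : 0 ≤ T)
    (hFcont : Continuous (Function.uncurry F))
    (hF : ∀ (y : H) (a : U), ‖F y a‖ ≤ C * (1 + ‖y‖))
    {X : ℝ → Ω → H} {un : ℕ → ℝ → Ω → U} {u : ℝ → Ω → U}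
    (hX : StronglyMeasurable (Function.uncurry X))
    (hXcont : ∀ ω, ContinuousOn (X · ω) (Icc 0 T))
    (hXint : ∫⁻ ω, (⨆ t ∈ Icc 0 T, ENNReal.ofReal (‖X t ω‖ ^ 2)) ∂P ≠ ∞)
    (hun : ∀ n, StronglyMeasurable (Function.uncurry (un n)))
    (hu : StronglyMeasurable (Function.uncurry u))
    (hconv : TendstoInMeasure (P.prod (volume.restrict (Icc 0 T)))
      (fun n p => un n p.2 p.1) atTop (fun p => u p.2 p.1)) :
    Tendsto (fun n => ∫⁻ ω, ENNReal.ofReal (driftGap F T (X · ω) (un n · ω) (u · ω) ^ 2) ∂P)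
      atTop (𝓝 0) := by
  set B : Ω → ℝ≥0∞ := fun ω =>
    ENNReal.ofReal (8 * C ^ 2 * T ^ 2) * (1 + ⨆ t ∈ Icc 0 T, ENNReal.ofReal (‖X t ω‖ ^ 2))
  have hB : ∫⁻ ω, B ω ∂P ≠ ∞ := by
    rw [lintegral_const_mul' _ _ ENNReal.ofReal_ne_top, lintegral_add_left measurable_const,
      lintegral_one]
    exact ENNReal.mul_ne_top ENNReal.ofReal_ne_top
      (ENNReal.add_ne_top.2 ⟨measure_ne_top P univ, hXint⟩)
  refine tendsto_of_subseq_tendsto fun ns hns => ?_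
  obtain ⟨ms, -, hae⟩ := TendstoInMeasure.exists_seq_tendsto_ae fun ε hε => (hconv ε hε).comp hns
  refine ⟨ms, ?_⟩
  have h := tendsto_lintegral_of_dominated_convergence B
    (fun k => ((stronglyMeasurable_driftGap hFcont hX (hun (ns (ms k))) hu).measurable.pow_const
      2).ennreal_ofReal)
    (fun k => Eventually.of_forall fun ω =>
      ofReal_driftGap_sq_le hC hT hF (hXcont ω) (un (ns (ms k)) · ω) (u · ω)) hB
    (f := fun _ => 0) ?_
  · simpa using h
  filter_upwards [Measure.ae_ae_of_ae_prod hae] with ω hω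
  have hgap := tendsto_driftGap_zero hFcont hF (hXcont ω)
    (fun k => (hun _).of_uncurry_right.aestronglyMeasurable)
    hu.of_uncurry_right.aestronglyMeasurable hω
  simpa [Function.comp_def] using (ENNReal.continuous_ofReal.tendsto _).comp (hgap.pow 2)

end

theorem stmt5_general
    {Ω H U : Type*} {mΩ : MeasurableSpace Ω}
    [NormedAddCommGroup H] [InnerProductSpace ℝ H]
    [NormedAddCommGroup U]
    (P : Measure Ω) [IsProbabilityMeasure P]
    (T : ℝ) (hT : 0 < T)
    (S : ℝ → H →L[ℝ] H)
    (hSbdd : ∀ t ∈ Set.Icc (0:ℝ) T, ‖S t‖ ≤ 1)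
    (F : H → U → H) (hFcont : Continuous (Function.uncurry F))
    (CF LF : ℝ) (hCF : 0 < CF) (hLF : 0 < LF)
    (hFgrowth : ∀ (y : H) (a : U), ‖F y a‖ ≤ CF * (1 + ‖y‖))
    (hFlip : ∀ (y y' : H) (a : U), ‖F y a - F y' a‖ ≤ LF * ‖y - y'‖)
    (un : ℕ → ℝ → Ω → U) (u : ℝ → Ω → U)
    (hunmeas : ∀ n, StronglyMeasurable (Function.uncurry (un n)))
    (humeas : StronglyMeasurable (Function.uncurry u))
    (huconv : TendstoInMeasure (P.prod (volume.restrict (Set.Icc (0:ℝ) T)))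
      (fun n p => un n p.2 p.1) atTop (fun p => u p.2 p.1))
    (Xn : ℕ → ℝ → Ω → H) (X : ℝ → Ω → H)
    (hXmeas : StronglyMeasurable (Function.uncurry X))
    (hXncont : ∀ n ω, ContinuousOn (fun t => Xn n t ω) (Set.Icc (0:ℝ) T))
    (hXcont : ∀ ω, ContinuousOn (fun t => X t ω) (Set.Icc (0:ℝ) T))
    (hXint : ∫⁻ ω, (⨆ t ∈ Set.Icc (0:ℝ) T, ENNReal.ofReal (‖X t ω‖ ^ 2)) ∂P ≠ ∞)
    (heq : ∀ n, ∀ᵐ ω ∂P, ∀ t ∈ Set.Icc (0:ℝ) T,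
      Xn n t ω - X t ω
        = ∫ s in (0:ℝ)..t, S (t - s) (F (Xn n s ω) (un n s ω) - F (X s ω) (u s ω))) :
    Tendsto
      (fun n => ∫⁻ ω, (⨆ t ∈ Set.Icc (0:ℝ) T, ENNReal.ofReal (‖Xn n t ω - X t ω‖ ^ 2)) ∂P)
      atTop (𝓝 0) := by
  have hpath : ∀ n, ∀ᵐ ω ∂P,
      (⨆ t ∈ Icc 0 T, ENNReal.ofReal (‖Xn n t ω - X t ω‖ ^ 2))
        ≤ ENNReal.ofReal (Real.exp (LF * T) ^ 2)
          * ENNReal.ofReal (driftGap F T (X · ω) (un n · ω) (u · ω) ^ 2) := fun n => by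
    filter_upwards [heq n] with ω hω
    exact iSup_ofReal_norm_sub_sq_le hSbdd hLF.le hFlip (hXncont n ω) (hXcont ω)
      (integrableOn_norm_sub_of_linear_growth hFcont hFgrowth (hXcont ω)
        ((hunmeas n).of_uncurry_right (y := ω)).aestronglyMeasurable
        (humeas.of_uncurry_right (y := ω)).aestronglyMeasurable) hω
  have hlim := tendsto_lintegral_driftGap_sq hCF.le hT.le hFcont hFgrowth hXmeas hXcont hXint
    hunmeas humeas huconv
  have hlim' := ENNReal.Tendsto.const_mul (a := ENNReal.ofReal (Real.exp (LF * T) ^ 2)) hlim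
    (Or.inr ENNReal.ofReal_ne_top)
  rw [mul_zero] at hlim'
  refine tendsto_of_tendsto_of_tendsto_of_le_of_le tendsto_const_nhds hlim' (fun _ => bot_le)
    fun n => ?_
  calc _ ≤ _ := lintegral_mono_ae (hpath n)
    _ = _ := lintegral_const_mul' _ _ ENNReal.ofReal_ne_top

/-- Convergence (3.1) in Step 1 of the proof of Proposition 3.2: if the controls `u^n`
converge to `u` in `P ⊗ dt`-measure on `Ω × [0,T]`, `F` is continuous with linear growth
and Lipschitz in the state variable uniformly in the control, and the processes `X^n, X`
have continuous paths with `E[sup_{t ∈ [0,T]} ‖X_t‖²] < ∞` and satisfy, `P`-a.s.,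
`X^n_t - X_t = ∫_0^t S(t-s) (F(X^n_s, u^n_s) - F(X_s, u_s)) ds` on `[0,T]`, then
`E[sup_{t ∈ [0,T]} ‖X^n_t - X_t‖²] → 0`. -/
theorem stmt5
    {Ω H U : Type*} {mΩ : MeasurableSpace Ω}
    [NormedAddCommGroup H] [InnerProductSpace ℝ H] [CompleteSpace H] [SecondCountableTopology H]
    [NormedAddCommGroup U] [InnerProductSpace ℝ U] [CompleteSpace U] [SecondCountableTopology U]
    (P : Measure Ω) [IsProbabilityMeasure P]
    (T : ℝ) (hT : 0 < T)
    (S : ℝ → H →L[ℝ] H)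
    (hSbdd : ∀ t ∈ Set.Icc (0:ℝ) T, ‖S t‖ ≤ 1)
    (hScont : ∀ y : H, ContinuousOn (fun t => S t y) (Set.Icc (0:ℝ) T))
    (F : H → U → H) (hFcont : Continuous (Function.uncurry F))
    (CF LF : ℝ) (hCF : 0 < CF) (hLF : 0 < LF)
    (hFgrowth : ∀ (y : H) (a : U), ‖F y a‖ ≤ CF * (1 + ‖y‖))
    (hFlip : ∀ (y y' : H) (a : U), ‖F y a - F y' a‖ ≤ LF * ‖y - y'‖)
    (un : ℕ → ℝ → Ω → U) (u : ℝ → Ω → U)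
    (hunmeas : ∀ n, StronglyMeasurable (Function.uncurry (un n)))
    (humeas : StronglyMeasurable (Function.uncurry u))
    (huconv : TendstoInMeasure (P.prod (volume.restrict (Set.Icc (0:ℝ) T)))
      (fun n p => un n p.2 p.1) atTop (fun p => u p.2 p.1))
    (Xn : ℕ → ℝ → Ω → H) (X : ℝ → Ω → H)
    (hXnmeas : ∀ n, StronglyMeasurable (Function.uncurry (Xn n)))
    (hXmeas : StronglyMeasurable (Function.uncurry X))
    (hXncont : ∀ n ω, ContinuousOn (fun t => Xn n t ω) (Set.Icc (0:ℝ) T))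
    (hXcont : ∀ ω, ContinuousOn (fun t => X t ω) (Set.Icc (0:ℝ) T))
    (hXint : ∫⁻ ω, (⨆ t ∈ Set.Icc (0:ℝ) T, ENNReal.ofReal (‖X t ω‖ ^ 2)) ∂P ≠ ∞)
    (heq : ∀ n, ∀ᵐ ω ∂P, ∀ t ∈ Set.Icc (0:ℝ) T,
      Xn n t ω - X t ω
        = ∫ s in (0:ℝ)..t, S (t - s) (F (Xn n s ω) (un n s ω) - F (X s ω) (u s ω))) :
    Tendsto
      (fun n => ∫⁻ ω, (⨆ t ∈ Set.Icc (0:ℝ) T, ENNReal.ofReal (‖Xn n t ω - X t ω‖ ^ 2)) ∂P)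
      atTop (𝓝 0) :=
  stmt5_general (mΩ := mΩ) P T hT S hSbdd F hFcont CF LF hCF hLF hFgrowth hFlip un u hunmeas humeas
    huconv Xn X hXmeas hXncont hXcont hXint heq
end

section
/- Let H and U be real separable Hilbert spaces and (Ω, F, P) a probability space. Let 𝒰 be a nonempty set and suppose that to each u ∈ 𝒰 there are associated measurable processes X^u : Ω × [0,∞) → H and u_· : Ω × [0,∞) → U. Let ℓ : H × U → ℝ be measurable and bounded, let φ, v̂ : H → ℝ be measurable with |φ(y)| ≤ C_φ·(1+‖y‖) and |v̂(y)| ≤ C_v·‖y‖ for all y ∈ H, let λ, v̂₀ ∈ ℝ, and let K > 0 be such that E‖X^u_T‖ ≤ K for every u ∈ 𝒰 and every T > 0. For T > 0 set v^T := inf_{u∈𝒰} E[∫_0^T ℓ(X^u_t, u_t) dt + φ(X^u_T)], and assume that for every T > 0 one has v̂₀ = inf_{u∈𝒰} E[∫_0^T (ℓ(X^u_t, u_t) − λ) dt + v̂(X^u_T)]. Then |v^T − v̂₀ − λ·T| ≤ C_φ·(1+K) + C_v·K for every T > 0; in particular v^T/T → λ as T → ∞. -/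
open MeasureTheory Filter Set
open scoped ENNReal NNReal Topology

/-!
For a fixed control `u` and horizon `T`, the two costs in the definitions of `v^T` and `v̂₀`
share the running cost `∫_0^T ℓ`, so their difference is `λ T + E[φ(X^u_T)] - E[v̂(X^u_T)]`, and
the growth bounds on `φ` and `v̂` together with `E‖X^u_T‖ ≤ K` bound the terminal part by
`C_φ(1+K) + C_v K`, uniformly in `u`. A uniform bound on the difference of two families passes
to their infima, which gives the estimate; dividing by `T` gives the limit.
-/

section Infimum

variable {ι : Type*} [Nonempty ι] {f g : ι → ℝ}

lemma ciInf_le_ciInf_add (hf : BddBelow (range f)) {c : ℝ} (h : ∀ i, f i ≤ g i + c) :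
    ⨅ i, f i ≤ (⨅ i, g i) + c :=
  sub_le_iff_le_add.1 <| le_ciInf fun i => sub_le_iff_le_add.2 <| (ciInf_le hf i).trans (h i)

lemma abs_ciInf_sub_ciInf_sub_le (hf : BddBelow (range f)) {a c : ℝ}
    (h : ∀ i, |f i - g i - a| ≤ c) : |(⨅ i, f i) - (⨅ i, g i) - a| ≤ c := by
  have hg : BddBelow (range g) := by
    obtain ⟨m, hm⟩ := hf
    refine ⟨m - a - c, ?_⟩
    rintro _ ⟨i, rfl⟩
    linarith [hm ⟨i, rfl⟩, (abs_le.1 (h i)).2]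
  have hfg := ciInf_le_ciInf_add (g := g) hf (c := a + c) fun i => by linarith [(abs_le.1 (h i)).2]
  have hgf := ciInf_le_ciInf_add (g := f) hg (c := c - a) fun i => by linarith [(abs_le.1 (h i)).1]
  exact abs_le.2 ⟨by linarith, by linarith⟩

end Infimum

lemma tendsto_div_atTop_of_abs_sub_sub_mul_le {v : ℝ → ℝ} {b lam c : ℝ}
    (h : ∀ T, 0 < T → |v T - b - lam * T| ≤ c) :
    Tendsto (fun T => v T / T) atTop (𝓝 lam) := by
  rw [← tendsto_sub_nhds_zero_iff]
  refine squeeze_zero_norm' (a := fun T => (|b| + c) / T) ?_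
    (tendsto_const_nhds.div_atTop tendsto_id)
  filter_upwards [eventually_gt_atTop 0] with T hT
  have hvT : |v T - lam * T| ≤ |b| + c := by
    calc |v T - lam * T| = |b + (v T - b - lam * T)| := by ring_nf
      _ ≤ |b| + |v T - b - lam * T| := abs_add_le _ _
      _ ≤ |b| + c := by gcongr; exact h T hT
  rw [Real.norm_eq_abs, show v T / T - lam = (v T - lam * T) / T by field_simp, abs_div,
    abs_of_pos hT]
  gcongr

section Terminal

variable {Ω E : Type*} [MeasurableSpace Ω] {P : Measure Ω} [NormedAddCommGroup E]
  {Y : Ω → E} {K : ℝ}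

lemma integrable_of_lintegral_ofReal_norm_le (hY : AEStronglyMeasurable Y P)
    (h : ∫⁻ ω, ENNReal.ofReal ‖Y ω‖ ∂P ≤ ENNReal.ofReal K) : Integrable Y P :=
  ⟨hY, by simpa only [HasFiniteIntegral, ofReal_norm] using h.trans_lt ENNReal.ofReal_lt_top⟩

lemma integral_norm_le_of_lintegral_ofReal_norm_le (hY : AEStronglyMeasurable Y P) (hK : 0 ≤ K)
    (h : ∫⁻ ω, ENNReal.ofReal ‖Y ω‖ ∂P ≤ ENNReal.ofReal K) : ∫ ω, ‖Y ω‖ ∂P ≤ K := by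
  rw [integral_norm_eq_lintegral_enorm hY]
  exact ENNReal.toReal_le_of_le_ofReal hK (by simpa only [ofReal_norm] using h)

variable [MeasurableSpace E] [BorelSpace E] [IsProbabilityMeasure P] {φ : E → ℝ} {C a : ℝ}

lemma integrable_comp_of_abs_le_mul_add_norm (hφ : Measurable φ) (hY : Integrable Y P)
    (hφY : ∀ y, |φ y| ≤ C * (a + ‖y‖)) : Integrable (fun ω => φ (Y ω)) P :=
  Integrable.mono' (((integrable_const a).add hY.norm).const_mul C)
    (hφ.comp_aemeasurable hY.aemeasurable).aestronglyMeasurable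
    (Eventually.of_forall fun ω => hφY (Y ω))

lemma abs_integral_comp_le_mul_add (hφ : Measurable φ) (hY : Integrable Y P)
    (hφY : ∀ y, |φ y| ≤ C * (a + ‖y‖)) (hC : 0 ≤ C) (hYK : ∫ ω, ‖Y ω‖ ∂P ≤ K) :
    |∫ ω, φ (Y ω) ∂P| ≤ C * (a + K) :=
  calc |∫ ω, φ (Y ω) ∂P| ≤ ∫ ω, |φ (Y ω)| ∂P := abs_integral_le_integral_abs
    _ ≤ ∫ ω, C * (a + ‖Y ω‖) ∂P :=
      integral_mono (integrable_comp_of_abs_le_mul_add_norm hφ hY hφY).abs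
        (((integrable_const a).add hY.norm).const_mul C) fun ω => hφY (Y ω)
    _ = C * (a + ∫ ω, ‖Y ω‖ ∂P) := by
      rw [integral_const_mul, integral_add (integrable_const a) hY.norm, integral_const,
        probReal_univ, one_smul]
    _ ≤ C * (a + K) := by gcongr

end Terminal

section RunningCost

variable {Ω : Type*} {g : ℝ → Ω → ℝ} {M T : ℝ} (hgM : ∀ t ω, |g t ω| ≤ M)
include hgM

lemma abs_setIntegral_Ioc_le (hT : 0 ≤ T) (ω : Ω) : |∫ t in Ioc 0 T, g t ω| ≤ M * T := by
  simpa only [Real.norm_eq_abs, Real.volume_real_Ioc_of_le hT, sub_zero] using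
    norm_setIntegral_le_of_norm_le_const (s := Ioc 0 T) (μ := volume) measure_Ioc_lt_top
      fun t _ => (Real.norm_eq_abs _).trans_le (hgM t ω)

variable [MeasurableSpace Ω] (hg : Measurable (Function.uncurry g))
include hg

lemma integrableOn_Ioc_of_abs_le (ω : Ω) : IntegrableOn (fun t => g t ω) (Ioc 0 T) :=
  Integrable.of_bound (hg.comp measurable_prodMk_right).aestronglyMeasurable M
    (Eventually.of_forall fun t => (Real.norm_eq_abs _).trans_le (hgM t ω))

lemma setIntegral_Ioc_sub_const (hT : 0 ≤ T) (ω : Ω) (c : ℝ) :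
    ∫ t in Ioc 0 T, (g t ω - c) = (∫ t in Ioc 0 T, g t ω) - c * T := by
  rw [integral_sub (integrableOn_Ioc_of_abs_le hgM hg ω) (integrableOn_const measure_Ioc_lt_top.ne),
    setIntegral_const, Real.volume_real_Ioc_of_le hT, sub_zero, smul_eq_mul, mul_comm]

variable {P : Measure Ω} [IsProbabilityMeasure P]

lemma integrable_setIntegral_Ioc (hT : 0 ≤ T) :
    Integrable (fun ω => ∫ t in Ioc 0 T, g t ω) P :=
  Integrable.of_bound hg.stronglyMeasurable.integral_prod_left'.aestronglyMeasurable (M * T)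
    (Eventually.of_forall fun ω =>
      (Real.norm_eq_abs _).trans_le (abs_setIntegral_Ioc_le hgM hT ω))

lemma abs_integral_cost_le (hT : 0 ≤ T) {h : Ω → ℝ} (hh : Integrable h P) :
    |∫ ω, (∫ t in Ioc 0 T, g t ω) + h ω ∂P| ≤ M * T + |∫ ω, h ω ∂P| := by
  rw [integral_add (integrable_setIntegral_Ioc hgM hg hT) hh]
  refine (abs_add_le _ _).trans (add_le_add_left ?_ _)
  simpa only [Real.norm_eq_abs, probReal_univ, mul_one] using
    norm_integral_le_of_norm_le_const (μ := P)
      (Eventually.of_forall fun ω => (Real.norm_eq_abs _).trans_le (abs_setIntegral_Ioc_le hgM hT ω))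

lemma integral_cost_sub_integral_shifted_cost (hT : 0 ≤ T) {h₁ h₂ : Ω → ℝ}
    (hh₁ : Integrable h₁ P) (hh₂ : Integrable h₂ P) (c : ℝ) :
    (∫ ω, (∫ t in Ioc 0 T, g t ω) + h₁ ω ∂P)
      - (∫ ω, (∫ t in Ioc 0 T, (g t ω - c)) + h₂ ω ∂P) - c * T
      = ∫ ω, h₁ ω ∂P - ∫ ω, h₂ ω ∂P := by
  have hF := integrable_setIntegral_Ioc hgM hg hT (P := P)
  have hshift : ∫ ω, (∫ t in Ioc 0 T, (g t ω - c)) + h₂ ω ∂P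
      = ∫ ω, (∫ t in Ioc 0 T, g t ω) + h₂ ω ∂P - c * T := by
    simp_rw [setIntegral_Ioc_sub_const hgM hg hT, sub_add_eq_add_sub]
    simpa only [integral_const, probReal_univ, one_smul, Pi.add_apply] using
      integral_sub (hF.add hh₂) (integrable_const (μ := P) (c * T))
  rw [hshift, integral_add hF hh₁, integral_add hF hh₂]
  ring

end RunningCost

theorem stmt7_general
    {Ω H U : Type*} {mΩ : MeasurableSpace Ω}
    [NormedAddCommGroup H]
    [MeasurableSpace H] [BorelSpace H]
    [NormedAddCommGroup U]
    [MeasurableSpace U] [BorelSpace U]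
    (P : Measure Ω) [IsProbabilityMeasure P]
    {𝒰 : Type*} [Nonempty 𝒰]
    (X : 𝒰 → ℝ → Ω → H) (ctrl : 𝒰 → ℝ → Ω → U)
    (hXmeas : ∀ u, StronglyMeasurable (Function.uncurry (X u)))
    (hctrlmeas : ∀ u, StronglyMeasurable (Function.uncurry (ctrl u)))
    (ℓ : H → U → ℝ) (hℓmeas : Measurable (Function.uncurry ℓ))
    (Mℓ : ℝ) (hℓbdd : ∀ (y : H) (a : U), |ℓ y a| ≤ Mℓ)
    (φ vhat : H → ℝ) (hφmeas : Measurable φ) (hvhatmeas : Measurable vhat)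
    (Cφ Cv : ℝ) (hCφ : 0 < Cφ) (hCv : 0 < Cv)
    (hφ : ∀ y : H, |φ y| ≤ Cφ * (1 + ‖y‖))
    (hvhatgrowth : ∀ y : H, |vhat y| ≤ Cv * ‖y‖)
    (lam vhat0 : ℝ)
    (K : ℝ) (hK : 0 < K)
    (hXbdd : ∀ (u : 𝒰) (T : ℝ), 0 < T →
      ∫⁻ ω, ENNReal.ofReal ‖X u T ω‖ ∂P ≤ ENNReal.ofReal K)
    (vT : ℝ → ℝ)
    (hvT : ∀ T : ℝ, 0 < T →
      vT T = ⨅ u : 𝒰,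
        ∫ ω, ((∫ t in Set.Ioc (0:ℝ) T, ℓ (X u t ω) (ctrl u t ω)) + φ (X u T ω)) ∂P)
    (hvhat0 : ∀ T : ℝ, 0 < T →
      vhat0 = ⨅ u : 𝒰,
        ∫ ω, ((∫ t in Set.Ioc (0:ℝ) T, (ℓ (X u t ω) (ctrl u t ω) - lam)) + vhat (X u T ω)) ∂P) :
    (∀ T : ℝ, 0 < T → |vT T - vhat0 - lam * T| ≤ Cφ * (1 + K) + Cv * K) ∧
    Tendsto (fun T : ℝ => vT T / T) atTop (𝓝 lam) := by
  have hestimate : ∀ T, 0 < T → |vT T - vhat0 - lam * T| ≤ Cφ * (1 + K) + Cv * K := by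
    intro T hT
    have hXT u : AEStronglyMeasurable (X u T) P :=
      ((hXmeas u).comp_measurable measurable_prodMk_left).aestronglyMeasurable
    have hXTint u : Integrable (X u T) P :=
      integrable_of_lintegral_ofReal_norm_le (hXT u) (hXbdd u T hT)
    have hXTnorm u : ∫ ω, ‖X u T ω‖ ∂P ≤ K :=
      integral_norm_le_of_lintegral_ofReal_norm_le (hXT u) hK.le (hXbdd u T hT)
    have hvhatgrowth' y : |vhat y| ≤ Cv * (0 + ‖y‖) := by simpa only [zero_add] using hvhatgrowth y
    have hφint u := integrable_comp_of_abs_le_mul_add_norm hφmeas (hXTint u) hφ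
    have hvhatint u := integrable_comp_of_abs_le_mul_add_norm hvhatmeas (hXTint u) hvhatgrowth'
    have hφbound u := abs_integral_comp_le_mul_add hφmeas (hXTint u) hφ hCφ.le (hXTnorm u)
    have hvhatbound u :=
      abs_integral_comp_le_mul_add hvhatmeas (hXTint u) hvhatgrowth' hCv.le (hXTnorm u)
    have hℓu u : Measurable (Function.uncurry fun t ω => ℓ (X u t ω) (ctrl u t ω)) :=
      hℓmeas.comp ((hXmeas u).measurable.prodMk (hctrlmeas u).measurable)
    rw [hvT T hT, hvhat0 T hT]
    refine abs_ciInf_sub_ciInf_sub_le ⟨-(Mℓ * T + Cφ * (1 + K)), ?_⟩ fun u => ?_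
    · rintro _ ⟨u, rfl⟩
      have hcost := abs_integral_cost_le (fun _ _ => hℓbdd _ _) (hℓu u) hT.le (hφint u)
      linarith [(abs_le.1 hcost).1, hφbound u]
    · rw [integral_cost_sub_integral_shifted_cost (fun _ _ => hℓbdd _ _) (hℓu u) hT.le
        (hφint u) (hvhatint u)]
      simpa only [zero_add] using (abs_sub _ _).trans (add_le_add (hφbound u) (hvhatbound u))
  exact ⟨hestimate, tendsto_div_atTop_of_abs_sub_sub_mul_le hestimate⟩

/-- Theorem 6.1 (long-time asymptotics of the finite-horizon value function): if
`v^T = inf_u E[∫_0^T ℓ(X^u_t,u_t) dt + φ(X^u_T)]` and, for every horizon `T > 0`,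
`v̂₀ = inf_u E[∫_0^T (ℓ(X^u_t,u_t) - λ) dt + v̂(X^u_T)]`, with `ℓ` bounded, `|φ(y)| ≤ C_φ(1+‖y‖)`,
`|v̂(y)| ≤ C_v ‖y‖` and `E‖X^u_T‖ ≤ K` uniformly in `u` and `T`, then
`|v^T - v̂₀ - λ T| ≤ C_φ(1+K) + C_v K` for every `T > 0`; in particular `v^T / T → λ`. -/
theorem stmt7
    {Ω H U : Type*} {mΩ : MeasurableSpace Ω}
    [NormedAddCommGroup H] [InnerProductSpace ℝ H] [CompleteSpace H] [SecondCountableTopology H]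
    [MeasurableSpace H] [BorelSpace H]
    [NormedAddCommGroup U] [InnerProductSpace ℝ U] [CompleteSpace U] [SecondCountableTopology U]
    [MeasurableSpace U] [BorelSpace U]
    (P : Measure Ω) [IsProbabilityMeasure P]
    {𝒰 : Type*} [Nonempty 𝒰]
    (X : 𝒰 → ℝ → Ω → H) (ctrl : 𝒰 → ℝ → Ω → U)
    (hXmeas : ∀ u, StronglyMeasurable (Function.uncurry (X u)))
    (hctrlmeas : ∀ u, StronglyMeasurable (Function.uncurry (ctrl u)))
    (ℓ : H → U → ℝ) (hℓmeas : Measurable (Function.uncurry ℓ))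
    (Mℓ : ℝ) (hℓbdd : ∀ (y : H) (a : U), |ℓ y a| ≤ Mℓ)
    (φ vhat : H → ℝ) (hφmeas : Measurable φ) (hvhatmeas : Measurable vhat)
    (Cφ Cv : ℝ) (hCφ : 0 < Cφ) (hCv : 0 < Cv)
    (hφ : ∀ y : H, |φ y| ≤ Cφ * (1 + ‖y‖))
    (hvhatgrowth : ∀ y : H, |vhat y| ≤ Cv * ‖y‖)
    (lam vhat0 : ℝ)
    (K : ℝ) (hK : 0 < K)
    (hXbdd : ∀ (u : 𝒰) (T : ℝ), 0 < T →
      ∫⁻ ω, ENNReal.ofReal ‖X u T ω‖ ∂P ≤ ENNReal.ofReal K)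
    (vT : ℝ → ℝ)
    (hvT : ∀ T : ℝ, 0 < T →
      vT T = ⨅ u : 𝒰,
        ∫ ω, ((∫ t in Set.Ioc (0:ℝ) T, ℓ (X u t ω) (ctrl u t ω)) + φ (X u T ω)) ∂P)
    (hvhat0 : ∀ T : ℝ, 0 < T →
      vhat0 = ⨅ u : 𝒰,
        ∫ ω, ((∫ t in Set.Ioc (0:ℝ) T, (ℓ (X u t ω) (ctrl u t ω) - lam)) + vhat (X u T ω)) ∂P) :
    (∀ T : ℝ, 0 < T → |vT T - vhat0 - lam * T| ≤ Cφ * (1 + K) + Cv * K) ∧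
    Tendsto (fun T : ℝ => vT T / T) atTop (𝓝 lam) :=
  stmt7_general (mΩ := mΩ) P X ctrl hXmeas hctrlmeas ℓ hℓmeas Mℓ hℓbdd φ vhat hφmeas hvhatmeas Cφ Cv
    hCφ hCv hφ hvhatgrowth lam vhat0 K hK hXbdd vT hvT hvhat0
end
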